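/- arXiv:cs/0606109 — 6 statements merged into one kernel-verified Lean document; each statement's English description precedes it below -/
import Mathlib

section
/- There exists a universal constant C > 0 such that for every finite metric space (X, d_X) with |X| = n ≥ 2 there is a finitely supported probability distribution D over metrics ρ on X such that: every ρ in the support is an ultrametric dominating d_X; every ρ in the support satisfies ρ(x,y) ≤ 32·n·d_X(x,y) for all x ≠ y; and for every x ∈ X and every u > 0, the probability under D that max_{y ≠ x} ρ(x,y)/d_X(x,y) ≥ u is at most C·(log n)/u. -/
/-- `d` is a metric on `X`. -/
def IsMetric {X : Type*} (d : X → X → ℝ) : Prop :=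
  (∀ x y, 0 ≤ d x y) ∧ (∀ x y, d x y = 0 ↔ x = y) ∧
  (∀ x y, d x y = d y x) ∧ (∀ x y z, d x z ≤ d x y + d y z)

/-- `ρ` is an ultrametric. -/
def IsUltrametric {X : Type*} (ρ : X → X → ℝ) : Prop :=
  ∀ u v w, ρ u v ≤ max (ρ u w) (ρ w v)

/-!
The distribution is a random hierarchical partition in the style of Fakcharoenphol–Rao–Talwar,
run on a coarsened metric: at scale `Δₖ = dm · 8ᵏ` (with `dm` the least distance), points closer
than `9Δₖ / (32n)` are glued together, and `quotientDist` is the resulting path metric. A random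
ordering `σ` and a random radius `r ∈ [Δₖ/4, 9Δₖ/32]` send each point to the first point of its
`r`-ball, and `ρ(x, y) = 9/8 · Δ_K` where `K` is one more than the last scale separating `x`
and `y`.

A shortest path has fewer than `n` steps, so gluing moves distances by at most `9Δₖ/32`; hence
clusters have diameter at most `9Δₖ/8` and `ρ` dominates `d`, while glued pairs are never
separated, which gives `ρ ≤ 32 n d`. If the gradient at `x` reaches `u`, some scale `k` cuts the
ball of radius `9Δₖ/u` around `x`. The first point `w` of the cut ball then lies in a thin shell
and precedes every point `v` with `q v ≤ q w`, an event of probability `1 / #{v | q v ≤ q w}`,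
while the radius must fall within `9Δₖ/u` of `q w`, which costs a factor `O(1/u)`. The sum of
`1 / #{v | q v ≤ q w}` over the shell is at most the increase of the logarithm of the number of
points deep inside the ball from scale `k` to `k + 1`, and these increases telescope to `log n`.
Here `q` is `quotientDist` from `x` at scale `k`.
-/
open Finset

namespace IsMetric

variable {X : Type*} {d : X → X → ℝ}

lemma nonneg (hd : IsMetric d) (x y : X) : 0 ≤ d x y := hd.1 x y

lemma self_eq_zero (hd : IsMetric d) (x : X) : d x x = 0 := (hd.2.1 x x).2 rfl

lemma symm (hd : IsMetric d) (x y : X) : d x y = d y x := hd.2.2.1 x y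

lemma triangle (hd : IsMetric d) (x y z : X) : d x z ≤ d x y + d y z := hd.2.2.2 x y z

lemma pos (hd : IsMetric d) {x y : X} (h : x ≠ y) : 0 < d x y :=
  (hd.nonneg x y).lt_of_ne fun h' => h ((hd.2.1 x y).1 h'.symm)

end IsMetric

section PathDist

variable {X : Type*} {c d : X → X → ℝ}

def walkCost (c : X → X → ℝ) {x y : X} (p : (⊤ : SimpleGraph X).Walk x y) : ℝ :=
  (p.darts.map fun e => c e.fst e.snd).sum

@[simp] lemma walkCost_nil (x : X) :
    walkCost c (SimpleGraph.Walk.nil : (⊤ : SimpleGraph X).Walk x x) = 0 := rfl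

@[simp] lemma walkCost_cons {x y z : X} (h : (⊤ : SimpleGraph X).Adj x y)
    (p : (⊤ : SimpleGraph X).Walk y z) : walkCost c (.cons h p) = c x y + walkCost c p := rfl

lemma walkCost_append {x y z : X} (p : (⊤ : SimpleGraph X).Walk x y)
    (q : (⊤ : SimpleGraph X).Walk y z) :
    walkCost c (p.append q) = walkCost c p + walkCost c q := by
  simp [walkCost]

lemma walkCost_nonneg (hc : ∀ a b, 0 ≤ c a b) {x y : X} (p : (⊤ : SimpleGraph X).Walk x y) :
    0 ≤ walkCost c p :=
  List.sum_nonneg (by simp only [List.mem_map]; rintro _ ⟨e, -, rfl⟩; exact hc _ _)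

lemma walkCost_bypass_le [DecidableEq X] (hc : ∀ a b, 0 ≤ c a b) {x y : X}
    (p : (⊤ : SimpleGraph X).Walk x y) : walkCost c p.bypass ≤ walkCost c p :=
  (p.darts_bypass_sublist_darts.map _).sum_le_sum
    (by simp only [List.mem_map]; rintro _ ⟨e, -, rfl⟩; exact hc _ _)

lemma IsMetric.le_walkCost (hd : IsMetric d) {x y : X} (p : (⊤ : SimpleGraph X).Walk x y) :
    d x y ≤ walkCost d p := by
  induction p with
  | nil => simp [hd.self_eq_zero]
  | @cons a b z _ p ih =>
    rw [walkCost_cons]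
    linarith [hd.triangle a b z]

lemma walkCost_le_walkCost_add {s : ℝ} (h : ∀ a b, d a b ≤ c a b + s) {x y : X}
    (p : (⊤ : SimpleGraph X).Walk x y) : walkCost d p ≤ walkCost c p + p.length * s := by
  induction p with
  | nil => simp
  | @cons a b _ _ p ih =>
    simp only [walkCost_cons, SimpleGraph.Walk.length_cons, Nat.cast_succ]
    linarith [h a b]

noncomputable def pathDist (c : X → X → ℝ) (x y : X) : ℝ :=
  ⨅ p : (⊤ : SimpleGraph X).Walk x y, walkCost c p

lemma pathDist_le_walkCost (hc : ∀ a b, 0 ≤ c a b) {x y : X}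
    (p : (⊤ : SimpleGraph X).Walk x y) : pathDist c x y ≤ walkCost c p :=
  ciInf_le ⟨0, by rintro _ ⟨q, rfl⟩; exact walkCost_nonneg hc q⟩ p

lemma le_pathDist {x y : X} {a : ℝ}
    (h : ∀ p : (⊤ : SimpleGraph X).Walk x y, a ≤ walkCost c p) : a ≤ pathDist c x y :=
  have : Nonempty ((⊤ : SimpleGraph X).Walk x y) := SimpleGraph.preconnected_top x y
  le_ciInf h

lemma pathDist_nonneg (hc : ∀ a b, 0 ≤ c a b) (x y : X) : 0 ≤ pathDist c x y :=
  le_pathDist (walkCost_nonneg hc)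

lemma pathDist_self (hc : ∀ a b, 0 ≤ c a b) (x : X) : pathDist c x x = 0 :=
  (pathDist_le_walkCost hc .nil).antisymm (pathDist_nonneg hc x x)

lemma pathDist_le (hc : ∀ a b, 0 ≤ c a b) (x y : X) : pathDist c x y ≤ c x y := by
  by_cases hxy : x = y
  · subst hxy
    exact (pathDist_self hc x).trans_le (hc x x)
  · simpa using pathDist_le_walkCost hc (.cons hxy .nil)

lemma pathDist_triangle (hc : ∀ a b, 0 ≤ c a b) (x y z : X) :
    pathDist c x z ≤ pathDist c x y + pathDist c y z := by
  rw [← sub_le_iff_le_add]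
  refine le_pathDist fun p => ?_
  rw [sub_le_iff_le_add, ← sub_le_iff_le_add']
  refine le_pathDist fun q => ?_
  linarith [pathDist_le_walkCost hc (p.append q), walkCost_append (c := c) p q]

lemma IsMetric.le_pathDist_add [Fintype X] (hd : IsMetric d) (hc : ∀ a b, 0 ≤ c a b) {s : ℝ}
    (hs : 0 ≤ s) (hdc : ∀ a b, d a b ≤ c a b + s) (x y : X) :
    d x y ≤ pathDist c x y + (Fintype.card X - 1) * s := by
  classical
  rw [← sub_le_iff_le_add]
  refine le_pathDist fun p => ?_
  -- shortcut `p` to a path: it has fewer than `card X` steps, each longer by at most `s` under `d`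
  have hlen : (p.bypass.length : ℝ) ≤ Fintype.card X - 1 := by
    have := p.bypass_isPath.length_lt
    rw [le_sub_iff_add_le]
    exact_mod_cast this
  have := hd.le_walkCost p.bypass
  have := walkCost_le_walkCost_add hdc p.bypass
  have := walkCost_bypass_le hc p
  linarith [mul_le_mul_of_nonneg_right hlen hs]

end PathDist

section QuotientDist

variable {X : Type*} {d : X → X → ℝ} {s : ℝ}

noncomputable def gluedDist (d : X → X → ℝ) (s : ℝ) (a b : X) : ℝ :=
  if d a b ≤ s then 0 else d a b

lemma gluedDist_nonneg (hd : IsMetric d) (a b : X) : 0 ≤ gluedDist d s a b := by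
  unfold gluedDist; split_ifs <;> simp [hd.nonneg]

lemma gluedDist_le (hd : IsMetric d) (a b : X) : gluedDist d s a b ≤ d a b := by
  unfold gluedDist; split_ifs <;> simp [hd.nonneg]

lemma le_gluedDist_add (hs : 0 ≤ s) (a b : X) : d a b ≤ gluedDist d s a b + s := by
  unfold gluedDist; split_ifs <;> linarith

noncomputable def quotientDist (d : X → X → ℝ) (s : ℝ) : X → X → ℝ := pathDist (gluedDist d s)

lemma quotientDist_self (hd : IsMetric d) (x : X) : quotientDist d s x x = 0 :=
  pathDist_self (gluedDist_nonneg hd) x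

lemma quotientDist_le (hd : IsMetric d) (x y : X) : quotientDist d s x y ≤ d x y :=
  (pathDist_le (gluedDist_nonneg hd) x y).trans (gluedDist_le hd x y)

lemma quotientDist_le_dist_add (hd : IsMetric d) (x y z : X) :
    quotientDist d s x z ≤ d x y + quotientDist d s y z := by
  have := quotientDist_le (s := s) hd x y
  have := pathDist_triangle (gluedDist_nonneg (s := s) hd) x y z
  unfold quotientDist at *
  linarith

lemma quotientDist_eq_of_dist_le (hd : IsMetric d) {x y : X} (h : d x y ≤ s) (z : X) :
    quotientDist d s x z = quotientDist d s y z := by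
  have hxy : pathDist (gluedDist d s) x y ≤ 0 := by
    simpa [gluedDist, h] using pathDist_le (gluedDist_nonneg (s := s) hd) x y
  have hyx : pathDist (gluedDist d s) y x ≤ 0 := by
    simpa [gluedDist, hd.symm y x, h] using pathDist_le (gluedDist_nonneg (s := s) hd) y x
  have := pathDist_triangle (gluedDist_nonneg (s := s) hd) x y z
  have := pathDist_triangle (gluedDist_nonneg (s := s) hd) y x z
  unfold quotientDist
  linarith

lemma IsMetric.le_quotientDist_add [Fintype X] (hd : IsMetric d) (hs : 0 ≤ s) (x y : X) :
    d x y ≤ quotientDist d s x y + (Fintype.card X - 1) * s :=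
  hd.le_pathDist_add (gluedDist_nonneg hd) hs (le_gluedDist_add hs) x y

end QuotientDist

section FirstInOrder

variable {X ι : Type*} [DecidableEq X] [LinearOrder ι] {T : Finset X}

lemma Equiv.swap_apply_mem {v w a : X} (hv : v ∈ T) (hw : w ∈ T) (ha : a ∈ T) :
    Equiv.swap v w a ∈ T := by
  rw [Equiv.swap_apply_def]
  split_ifs <;> assumption

lemma swap_trans_le_of_le {σ : X ≃ ι} {v w : X} (hv : v ∈ T) (hw : w ∈ T)
    (h : ∀ a ∈ T, σ w ≤ σ a) :
    ∀ a ∈ T, (Equiv.swap v w).trans σ v ≤ (Equiv.swap v w).trans σ a :=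
  fun a ha => by simpa using h _ (Equiv.swap_apply_mem hv hw ha)

lemma card_filter_first_eq [Fintype X] [Fintype ι] {v w : X} (hv : v ∈ T) (hw : w ∈ T) :
    #{σ : X ≃ ι | ∀ a ∈ T, σ v ≤ σ a} = #{σ : X ≃ ι | ∀ a ∈ T, σ w ≤ σ a} := by
  refine card_bij' (fun σ _ => (Equiv.swap v w).trans σ) (fun σ _ => (Equiv.swap v w).trans σ)
    ?_ ?_ ?_ ?_
  · intro σ hσ
    simp only [mem_filter, mem_univ, true_and] at hσ ⊢
    rw [Equiv.swap_comm]
    exact swap_trans_le_of_le hw hv hσ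
  · intro σ hσ
    simp only [mem_filter, mem_univ, true_and] at hσ ⊢
    exact swap_trans_le_of_le hv hw hσ
  all_goals intro σ _; ext; simp

lemma card_filter_first_mul_card [Fintype X] [Fintype ι] {w : X} (hw : w ∈ T) :
    #{σ : X ≃ ι | ∀ a ∈ T, σ w ≤ σ a} * #T = Fintype.card (X ≃ ι) := by
  have hunique : ∀ σ : X ≃ ι, #{v ∈ T | ∀ a ∈ T, σ v ≤ σ a} = 1 := by
    intro σ
    obtain ⟨v₀, hv₀, hmin⟩ := T.exists_min_image σ ⟨w, hw⟩
    refine card_eq_one.2 ⟨v₀, ext fun v => ?_⟩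
    simp only [mem_filter, mem_singleton]
    constructor
    · rintro ⟨hv, h⟩
      exact σ.injective ((h v₀ hv₀).antisymm (hmin v hv))
    · rintro rfl
      exact ⟨hv₀, hmin⟩
  calc #{σ : X ≃ ι | ∀ a ∈ T, σ w ≤ σ a} * #T
      = ∑ v ∈ T, #{σ : X ≃ ι | ∀ a ∈ T, σ v ≤ σ a} := by
        rw [sum_congr rfl fun v hv => card_filter_first_eq hv hw, sum_const, smul_eq_mul,
          mul_comm]
    _ = ∑ σ : X ≃ ι, #{v ∈ T | ∀ a ∈ T, σ v ≤ σ a} := by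
        simp only [card_filter]
        exact sum_comm
    _ = Fintype.card (X ≃ ι) := by simp [hunique]

end FirstInOrder

section Counting

lemma card_filter_grid_le (N : ℕ) {a h c L : ℝ} (hh : 0 < h) (hL : 0 ≤ L) :
    (#{j : Fin N | c ≤ a + j * h ∧ a + j * h ≤ c + L} : ℝ) ≤ L / h + 1 := by
  set S := ({j : Fin N | c ≤ a + j * h ∧ a + j * h ≤ c + L} : Finset (Fin N))
  rcases S.eq_empty_or_nonempty with hS | hS
  · rw [hS, card_empty, Nat.cast_zero]; positivity
  obtain ⟨j₀, hj₀, hmin⟩ := S.exists_min_image (fun j : Fin N => (j : ℕ)) hS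
  have hsub : S.map Fin.valEmbedding ⊆ Icc (j₀ : ℕ) (j₀ + ⌊L / h⌋₊) := by
    intro i hi
    obtain ⟨j, hj, rfl⟩ := mem_map.1 hi
    have hle := hmin j hj
    have hspread : (((j : ℕ) - j₀ : ℕ) : ℝ) ≤ L / h := by
      rw [Nat.cast_sub hle, le_div_iff₀ hh]
      linarith [(mem_filter.1 hj).2.2, (mem_filter.1 hj₀).2.1]
    have := Nat.le_floor hspread
    simp only [Fin.valEmbedding_apply, mem_Icc]
    omega
  have hcard : #S ≤ ⌊L / h⌋₊ + 1 := by
    have := (card_map Fin.valEmbedding).symm.trans_le (card_le_card hsub)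
    simp only [Nat.card_Icc] at this
    omega
  calc (#S : ℝ) ≤ ⌊L / h⌋₊ + 1 := by exact_mod_cast hcard
    _ ≤ L / h + 1 := by gcongr; exact Nat.floor_le (by positivity)

lemma inv_add_one_le_log_sub_log {m : ℝ} (hm : 0 < m) :
    (m + 1)⁻¹ ≤ Real.log (m + 1) - Real.log m := by
  have := Real.one_sub_inv_le_log_of_pos (x := (m + 1) / m) (by positivity)
  rw [Real.log_div (by positivity) hm.ne', inv_div] at this
  convert this using 1
  field_simp
  ring

variable {X : Type*} [Fintype X] [DecidableEq X]

/-- Ordering `W` by `q`, its `i`-th point has at least `#{v | q v ≤ a} + i` points `v` with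
`q v` below its own. -/
lemma sum_inv_card_sublevel_le_log {q : X → ℝ} {a : ℝ} (hA : ∃ v, q v ≤ a) (W : Finset X)
    (hW : ∀ w ∈ W, a < q w) :
    ∑ w ∈ W, (#{v | q v ≤ q w} : ℝ)⁻¹ ≤
      Real.log (#{v | q v ≤ a} + #W) - Real.log #{v | q v ≤ a} := by
  set A : Finset X := {v | q v ≤ a}
  have hApos : (0 : ℝ) < #A := by
    obtain ⟨v, hv⟩ := hA
    exact_mod_cast card_pos.2 ⟨v, mem_filter.2 ⟨mem_univ v, hv⟩⟩
  induction W using Finset.induction_on_max_value q with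
  | empty => simp
  | insert w W hwW hmax ih =>
    have ih := ih fun v hv => hW v (mem_insert_of_mem hv)
    have hdisj : Disjoint A (insert w W) := disjoint_left.2 fun v hvA hvW => by
      have := hW v hvW; have := (mem_filter.1 hvA).2; linarith
    have hsub : A ∪ insert w W ⊆ ({v | q v ≤ q w} : Finset X) := by
      intro v hv
      simp only [mem_union, mem_insert, mem_filter, mem_univ, true_and, A] at hv ⊢
      rcases hv with hv | rfl | hv
      · linarith [hW w (mem_insert_self w W)]
      · exact le_rfl
      · exact hmax v hv
    have hcard : (#A : ℝ) + #W + 1 ≤ #{v | q v ≤ q w} := by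
      have := card_le_card hsub
      rw [card_union_of_disjoint hdisj, card_insert_of_notMem hwW] at this
      exact_mod_cast this
    rw [sum_insert hwW, card_insert_of_notMem hwW, Nat.cast_succ, ← add_assoc]
    have hstep := inv_add_one_le_log_sub_log (m := #A + #W) (by positivity)
    have hinv : ((#({v | q v ≤ q w} : Finset X) : ℕ) : ℝ)⁻¹ ≤ ((#A : ℝ) + #W + 1)⁻¹ :=
      inv_anti₀ (by positivity) hcard
    linarith

end Counting

section Cluster

variable {X ι : Type*} [Fintype X] [LinearOrder ι] {d : X → X → ℝ} {s r : ℝ}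

/-- The `σ`-rank of the first point of the `r`-ball around `z`; it is `⊤` only for an empty
ball. -/
noncomputable def clusterLabel (d : X → X → ℝ) (s r : ℝ) (σ : X ≃ ι) (z : X) : WithTop ι :=
  ((univ.filter fun w => quotientDist d s z w ≤ r).image σ).min

lemma clusterLabel_eq_of_forall_le {σ : X ≃ ι} {z w : X} (hw : quotientDist d s z w ≤ r)
    (hmin : ∀ v, quotientDist d s z v ≤ r → σ w ≤ σ v) : clusterLabel d s r σ z = σ w :=
  (Finset.min_le (mem_image_of_mem σ (by simpa using hw))).antisymm
    (Finset.le_min (by simpa using fun v hv => WithTop.coe_le_coe.2 (hmin v hv)))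

lemma exists_clusterLabel_eq (hd : IsMetric d) (hr : 0 ≤ r) (σ : X ≃ ι) (z : X) :
    ∃ w, quotientDist d s z w ≤ r ∧ clusterLabel d s r σ z = σ w := by
  obtain ⟨w, hw, hmin⟩ := (univ.filter fun w => quotientDist d s z w ≤ r).exists_min_image σ
    ⟨z, by simpa [quotientDist_self hd] using hr⟩
  simp only [mem_filter, mem_univ, true_and] at hw hmin
  exact ⟨w, hw, clusterLabel_eq_of_forall_le hw hmin⟩

lemma clusterLabel_eq_of_dist_le (hd : IsMetric d) (σ : X ≃ ι) {x y : X} (h : d x y ≤ s) :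
    clusterLabel d s r σ x = clusterLabel d s r σ y := by
  simp only [clusterLabel, quotientDist_eq_of_dist_le hd h]

lemma dist_le_of_clusterLabel_eq (hd : IsMetric d) (hs : 0 ≤ s) (hr : 0 ≤ r) {σ : X ≃ ι}
    {x y : X} (h : clusterLabel d s r σ x = clusterLabel d s r σ y) :
    d x y ≤ 2 * r + 2 * ((Fintype.card X - 1) * s) := by
  obtain ⟨w, hxw, hx⟩ := exists_clusterLabel_eq hd hr σ x
  obtain ⟨w', hyw', hy⟩ := exists_clusterLabel_eq hd hr σ y
  obtain rfl : w = w' := σ.injective (WithTop.coe_injective (hx.symm.trans (h.trans hy)))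
  linarith [hd.triangle x w y, hd.symm w y, hd.le_quotientDist_add hs x w,
    hd.le_quotientDist_add hs y w]

/-- `w` is the first point of the `(r + t)`-ball around `x`; were it in the `(r - t)`-ball, it
would be the first point of both the `r`-balls around `x` and around `y`. -/
lemma exists_first_in_shell_of_clusterLabel_ne (hd : IsMetric d) (hr : 0 ≤ r) {t : ℝ}
    {σ : X ≃ ι} {x y : X} (hxy : d x y ≤ t)
    (h : clusterLabel d s r σ x ≠ clusterLabel d s r σ y) :
    ∃ w, r - t < quotientDist d s x w ∧ quotientDist d s x w ≤ r + t ∧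
      ∀ v, quotientDist d s x v ≤ quotientDist d s x w → σ w ≤ σ v := by
  have ht : 0 ≤ t := (hd.nonneg x y).trans hxy
  obtain ⟨w, hw, hmin⟩ :=
    (univ.filter fun w => quotientDist d s x w ≤ r + t).exists_min_image σ
      ⟨x, by simpa [quotientDist_self hd] using add_nonneg hr ht⟩
  simp only [mem_filter, mem_univ, true_and] at hw hmin
  refine ⟨w, lt_of_not_ge fun hwr => h ?_, hw, fun v hv => hmin v (hv.trans hw)⟩
  have hyx : d y x ≤ t := hd.symm y x ▸ hxy
  rw [clusterLabel_eq_of_forall_le (by linarith) fun v hv => hmin v (by linarith),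
    clusterLabel_eq_of_forall_le (by linarith [quotientDist_le_dist_add (s := s) hd y x w])
      fun v hv => hmin v (by linarith [quotientDist_le_dist_add (s := s) hd x y v])]

end Cluster

section PaddingCount

variable {X ι : Type*} [Fintype X] [DecidableEq X] [Fintype ι] [LinearOrder ι]
  {d : X → X → ℝ} {s : ℝ}

/-- By `exists_first_in_shell_of_clusterLabel_ne`, each counted outcome has a shell point `w`
that comes first among `{v | q v ≤ q w}` (a `1 / #{v | q v ≤ q w}` fraction of the orderings)
and a radius within `t` of `q w` (at most `2t/h + 1` grid values). -/
lemma card_filter_clusterLabel_ne_le (hd : IsMetric d) {N : ℕ} {a h b t : ℝ} (ha : 0 ≤ a)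
    (hh : 0 < h) (ht : 0 ≤ t) (hb : ∀ j : Fin N, a + j * h ≤ b) (x : X) :
    (#{ω : (X ≃ ι) × Fin N | ∃ y, d x y ≤ t ∧
        clusterLabel d s (a + ω.2 * h) ω.1 x ≠ clusterLabel d s (a + ω.2 * h) ω.1 y} : ℝ) ≤
      Fintype.card (X ≃ ι) * (2 * t / h + 1) *
        ∑ w ∈ ({w | a - t < quotientDist d s x w ∧ quotientDist d s x w ≤ b + t} : Finset X),
          (#{v | quotientDist d s x v ≤ quotientDist d s x w} : ℝ)⁻¹ := by
  set q := quotientDist d s x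
  set W : Finset X := {w | a - t < q w ∧ q w ≤ b + t}
  set T : X → Finset X := fun w => {v | q v ≤ q w}
  set first : X → Finset (X ≃ ι) := fun w => {σ | ∀ v ∈ T w, σ w ≤ σ v}
  set grid : X → Finset (Fin N) := fun w =>
    {j | q w - t ≤ a + j * h ∧ a + j * h ≤ q w - t + 2 * t}
  have hsub : ({ω : (X ≃ ι) × Fin N | ∃ y, d x y ≤ t ∧
      clusterLabel d s (a + ω.2 * h) ω.1 x ≠ clusterLabel d s (a + ω.2 * h) ω.1 y} :
        Finset ((X ≃ ι) × Fin N)) ⊆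
      W.biUnion fun w => first w ×ˢ grid w := by
    intro ω hω
    obtain ⟨y, hxy, hne⟩ := (mem_filter.1 hω).2
    obtain ⟨w, hlo, hhi, hfirst⟩ :=
      exists_first_in_shell_of_clusterLabel_ne hd (by positivity) hxy hne
    have := hb ω.2
    have : 0 ≤ (ω.2 : ℝ) * h := by positivity
    simp only [mem_biUnion, mem_product, mem_filter, mem_univ, true_and, W, first, grid, T, q]
    exact ⟨w, ⟨by linarith, by linarith⟩, fun v hv => hfirst v hv, by linarith, by linarith⟩
  have hfirst : ∀ w, (#(first w) : ℝ) = Fintype.card (X ≃ ι) * (#(T w) : ℝ)⁻¹ := by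
    intro w
    have hT : (0 : ℝ) < #(T w) := by exact_mod_cast card_pos.2 ⟨w, by simp [T]⟩
    have := card_filter_first_mul_card (ι := ι) (w := w) (show w ∈ T w by simp [T])
    rw [eq_mul_inv_iff_mul_eq₀ hT.ne']
    exact_mod_cast this
  have hgrid : ∀ w, (#(grid w) : ℝ) ≤ 2 * t / h + 1 := fun w =>
    card_filter_grid_le N hh (by positivity)
  calc _ ≤ (#(W.biUnion fun w => first w ×ˢ grid w) : ℝ) := by exact_mod_cast card_le_card hsub
    _ ≤ ∑ w ∈ W, (#(first w) : ℝ) * #(grid w) := by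
        exact_mod_cast card_biUnion_le.trans (by simp [card_product])
    _ ≤ ∑ w ∈ W, Fintype.card (X ≃ ι) * (#(T w) : ℝ)⁻¹ * (2 * t / h + 1) := by
        gcongr with w; rw [hfirst]; exact hgrid w
    _ = _ := by rw [mul_sum]; exact sum_congr rfl fun w _ => by ring

end PaddingCount

/-- The random data: an ordering of the points and a grid index for the radii. -/
abbrev Sample (X : Type*) [Fintype X] (N : ℕ) := (X ≃ Fin (Fintype.card X)) × Fin N

section Hierarchy

variable {X : Type*} [Fintype X] {d : X → X → ℝ} {dm : ℝ} {M N : ℕ}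

def scale (dm : ℝ) (k : ℕ) : ℝ := dm * 8 ^ k

lemma scale_pos (hdm : 0 < dm) (k : ℕ) : 0 < scale dm k := by unfold scale; positivity

lemma scale_succ (dm : ℝ) (k : ℕ) : scale dm (k + 1) = 8 * scale dm k := by
  unfold scale; ring

lemma scale_mono (hdm : 0 < dm) : Monotone (scale dm) := fun k k' h => by
  unfold scale; gcongr; norm_num

/-- Chosen so that `(n - 1)` times it is at most `9/32 · scale dm k` and `32 n` times it is
`9 · scale dm k = 9/8 · scale dm (k + 1)`. -/
noncomputable def gluingThreshold (n : ℕ) (dm : ℝ) (k : ℕ) : ℝ := 9 / 32 * scale dm k / n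

lemma gluingThreshold_nonneg (n : ℕ) (hdm : 0 < dm) (k : ℕ) : 0 ≤ gluingThreshold n dm k := by
  unfold gluingThreshold; have := scale_pos hdm k; positivity

lemma card_sub_one_mul_gluingThreshold_le (n : ℕ) (hdm : 0 < dm) (k : ℕ) :
    ((n : ℝ) - 1) * gluingThreshold n dm k ≤ 9 / 32 * scale dm k := by
  have := scale_pos hdm k
  unfold gluingThreshold
  rcases n.eq_zero_or_pos with rfl | hn
  · simp; positivity
  · rw [mul_div_assoc', div_le_iff₀ (by exact_mod_cast hn)]
    nlinarith

noncomputable def radius (dm : ℝ) (N k : ℕ) (j : Fin N) : ℝ :=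
  scale dm k / 4 + j * (scale dm k / (32 * N))

lemma radius_nonneg (hdm : 0 < dm) (k : ℕ) (j : Fin N) : 0 ≤ radius dm N k j := by
  have := scale_pos hdm k
  unfold radius; positivity

lemma radius_le (hdm : 0 < dm) (k : ℕ) (j : Fin N) : radius dm N k j ≤ 9 / 32 * scale dm k := by
  have := scale_pos hdm k
  have hN : (0 : ℝ) < N := by exact_mod_cast j.pos
  have hstep : (j : ℝ) * (scale dm k / (32 * N)) ≤ N * (scale dm k / (32 * N)) := by
    gcongr; exact j.isLt.le
  have hN32 : (N : ℝ) * (scale dm k / (32 * N)) = scale dm k / 32 := by field_simp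
  unfold radius
  linarith

variable (d dm M N)

noncomputable def hstLabel (ω : Sample X N) (k : ℕ) : X → WithTop (Fin (Fintype.card X)) :=
  clusterLabel d (gluingThreshold (Fintype.card X) dm k) (radius dm N k ω.2) ω.1

noncomputable def separatingScales (ω : Sample X N) (x y : X) : Finset ℕ :=
  (range M).filter fun k => hstLabel d dm N ω k x ≠ hstLabel d dm N ω k y

noncomputable def level (ω : Sample X N) (x y : X) : ℕ :=
  (separatingScales d dm M N ω x y).sup (· + 1)

variable {d dm M N}

lemma gluingThreshold_lt_of_hstLabel_ne (hd : IsMetric d) {ω : Sample X N} {k : ℕ} {x y : X}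
    (h : hstLabel d dm N ω k x ≠ hstLabel d dm N ω k y) :
    gluingThreshold (Fintype.card X) dm k < d x y :=
  lt_of_not_ge fun hxy => h (clusterLabel_eq_of_dist_le hd ω.1 hxy)

lemma separatingScales_comm (ω : Sample X N) (x y : X) :
    separatingScales d dm M N ω x y = separatingScales d dm M N ω y x := by
  simp only [separatingScales, ne_comm]

lemma separatingScales_subset_union (ω : Sample X N) (x y z : X) :
    separatingScales d dm M N ω x y ⊆
      separatingScales d dm M N ω x z ∪ separatingScales d dm M N ω z y := by
  intro k
  simp only [separatingScales, mem_union, mem_filter]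
  rintro ⟨hk, hne⟩
  by_cases h : hstLabel d dm N ω k x = hstLabel d dm N ω k z
  · exact .inr ⟨hk, h ▸ hne⟩
  · exact .inl ⟨hk, h⟩

lemma level_le_max (ω : Sample X N) (x y z : X) :
    level d dm M N ω x y ≤ max (level d dm M N ω x z) (level d dm M N ω z y) :=
  (sup_mono (separatingScales_subset_union ω x y z)).trans sup_union.le

lemma level_le (ω : Sample X N) (x y : X) : level d dm M N ω x y ≤ M :=
  Finset.sup_le fun _ hk => mem_range.1 (mem_filter.1 hk).1

lemma hstLabel_level_eq (ω : Sample X N) {x y : X} (hlt : level d dm M N ω x y < M) :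
    hstLabel d dm N ω (level d dm M N ω x y) x = hstLabel d dm N ω (level d dm M N ω x y) y := by
  by_contra h
  have hmem : level d dm M N ω x y ∈ separatingScales d dm M N ω x y :=
    mem_filter.2 ⟨mem_range.2 hlt, h⟩
  have := le_sup (f := (· + 1)) hmem
  simp only [level] at this
  omega

section Dist

variable [DecidableEq X]

variable (d dm M N) in
noncomputable def hstDist (ω : Sample X N) (x y : X) : ℝ :=
  if x = y then 0 else 9 / 8 * scale dm (level d dm M N ω x y)

lemma hstDist_of_ne (ω : Sample X N) {x y : X} (h : x ≠ y) :
    hstDist d dm M N ω x y = 9 / 8 * scale dm (level d dm M N ω x y) := if_neg h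

lemma hstDist_cases (ω : Sample X N) {x y : X} (h : x ≠ y) :
    hstDist d dm M N ω x y = 9 / 8 * dm ∨
      ∃ k ∈ separatingScales d dm M N ω x y, hstDist d dm M N ω x y = 9 * scale dm k := by
  rw [hstDist_of_ne ω h]
  rcases (separatingScales d dm M N ω x y).eq_empty_or_nonempty with hS | hS
  · left
    simp [level, hS, scale]
  · right
    refine ⟨_, max'_mem _ hS, ?_⟩
    have : level d dm M N ω x y = (separatingScales d dm M N ω x y).max' hS + 1 :=
      (Finset.sup_le fun k hk => Nat.succ_le_succ (le_max' _ k hk)).antisymm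
        (le_sup (f := (· + 1)) (max'_mem _ hS))
    rw [this, scale_succ]
    ring

lemma hstDist_nonneg (hdm : 0 < dm) (ω : Sample X N) (x y : X) :
    0 ≤ hstDist d dm M N ω x y := by
  unfold hstDist; have := scale_pos hdm (level d dm M N ω x y); split_ifs <;> positivity

lemma hstDist_isUltrametric (hdm : 0 < dm) (ω : Sample X N) :
    IsUltrametric (hstDist d dm M N ω) := by
  intro x y z
  by_cases hxy : x = y
  · simp only [hstDist, if_pos hxy]
    exact le_max_of_le_left (hstDist_nonneg hdm ω x z)
  by_cases hxz : x = z
  · subst hxz; exact le_max_right _ _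
  by_cases hzy : z = y
  · subst hzy; exact le_max_left _ _
  have hmono : Monotone fun k => 9 / 8 * scale dm k := fun k k' h => by
    have := scale_mono hdm h; dsimp only; linarith
  simp only [hstDist_of_ne ω hxy, hstDist_of_ne ω hxz, hstDist_of_ne ω hzy, ← hmono.map_max]
  exact hmono (level_le_max ω x y z)

lemma hstDist_isMetric (hdm : 0 < dm) (ω : Sample X N) : IsMetric (hstDist d dm M N ω) := by
  refine ⟨hstDist_nonneg hdm ω, fun x y => ⟨fun h => ?_, fun h => if_pos h⟩, fun x y => ?_,
    fun x y z => (hstDist_isUltrametric hdm ω x z y).trans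
      (max_le_add_of_nonneg (hstDist_nonneg hdm ω x y) (hstDist_nonneg hdm ω y z))⟩
  · by_contra hxy
    rw [hstDist_of_ne ω hxy] at h
    linarith [scale_pos hdm (level d dm M N ω x y)]
  · simp only [hstDist, eq_comm (a := x), level, separatingScales_comm ω x y]

lemma dist_le_hstDist (hd : IsMetric d) (hdm : 0 < dm) (hdiam : ∀ z w, d z w ≤ scale dm M / 4)
    (ω : Sample X N) (x y : X) : d x y ≤ hstDist d dm M N ω x y := by
  by_cases hxy : x = y
  · simp [hxy, hd.self_eq_zero, hstDist]
  rw [hstDist_of_ne ω hxy]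
  have hΔ := scale_pos hdm (level d dm M N ω x y)
  rcases (level_le ω x y).eq_or_lt with hM | hlt
  · rw [hM] at hΔ ⊢
    linarith [hdiam x y]
  · linarith [dist_le_of_clusterLabel_eq hd (gluingThreshold_nonneg _ hdm _)
      (radius_nonneg hdm _ _) (hstLabel_level_eq ω hlt), radius_le hdm (level d dm M N ω x y) ω.2,
      card_sub_one_mul_gluingThreshold_le (Fintype.card X) hdm (level d dm M N ω x y)]

lemma hstDist_le_mul_dist (hd : IsMetric d) (hdm : 0 < dm) (hdmin : ∀ z w, z ≠ w → dm ≤ d z w)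
    (ω : Sample X N) {x y : X} (hxy : x ≠ y) :
    hstDist d dm M N ω x y ≤ 32 * Fintype.card X * d x y := by
  have hn : (1 : ℝ) ≤ Fintype.card X := by exact_mod_cast Fintype.card_pos_iff.2 ⟨x⟩
  rcases hstDist_cases (d := d) (dm := dm) (M := M) ω hxy with h | ⟨k, hk, h⟩
  · nlinarith [hdmin x y hxy]
  · have hlt := gluingThreshold_lt_of_hstLabel_ne hd (mem_filter.1 hk).2
    rw [h]
    unfold gluingThreshold at hlt
    rw [div_lt_iff₀ (by linarith)] at hlt
    linarith

lemma exists_separatingScale_of_mul_dist_le (hd : IsMetric d)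
    (hdmin : ∀ z w, z ≠ w → dm ≤ d z w) (ω : Sample X N) {x y : X} (hxy : x ≠ y) {u : ℝ}
    (hu : 2 ≤ u) (h : u * d x y ≤ hstDist d dm M N ω x y) :
    ∃ k ∈ separatingScales d dm M N ω x y, d x y ≤ 9 * scale dm k / u := by
  have hpos := hd.pos hxy
  rcases hstDist_cases (d := d) (dm := dm) (M := M) ω hxy with h' | ⟨k, hk, h'⟩
  · nlinarith [hdmin x y hxy]
  · exact ⟨k, hk, by rw [le_div_iff₀ (by linarith)]; linarith⟩

end Dist

end Hierarchy

section TailBound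

variable {X : Type*} [Fintype X] {d : X → X → ℝ} {dm : ℝ} {M N : ℕ}

variable (d dm) in
/-- The number of points well inside the smallest possible ball around `x` at scale `k`;
its logarithm telescopes over the scales. -/
noncomputable def coreCard (u : ℝ) (x : X) (k : ℕ) : ℕ :=
  #{v | quotientDist d (gluingThreshold (Fintype.card X) dm k) x v ≤
    scale dm k / 4 - 9 * scale dm k / u}

lemma self_mem_core (hd : IsMetric d) (hdm : 0 < dm) {u : ℝ} (hu : 36 ≤ u) (x : X) (k : ℕ) :
    quotientDist d (gluingThreshold (Fintype.card X) dm k) x x ≤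
      scale dm k / 4 - 9 * scale dm k / u := by
  have := scale_pos hdm k
  rw [quotientDist_self hd, sub_nonneg, div_le_div_iff₀ (by linarith) (by norm_num)]
  nlinarith

lemma coreCard_pos (hd : IsMetric d) (hdm : 0 < dm) {u : ℝ} (hu : 36 ≤ u) (x : X) (k : ℕ) :
    0 < coreCard d dm u x k :=
  card_pos.2 ⟨x, mem_filter.2 ⟨mem_univ x, self_mem_core hd hdm hu x k⟩⟩

/-- Gluing at scale `k` shrinks distances by at most `9/32 · scale dm k`, which is small
against the core radius at scale `k + 1`. -/
lemma card_le_coreCard_succ (hd : IsMetric d) (hdm : 0 < dm) {u : ℝ} (hu : 400 ≤ u) (x : X)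
    (k : ℕ) :
    #{v | quotientDist d (gluingThreshold (Fintype.card X) dm k) x v ≤
      9 / 32 * scale dm k + 9 * scale dm k / u} ≤ coreCard d dm u x (k + 1) := by
  refine card_le_card fun v hv => mem_filter.2 ⟨mem_univ v, ?_⟩
  have hv := (mem_filter.1 hv).2
  have := scale_pos hdm k
  have ht : 9 * scale dm k / u ≤ scale dm k / 32 := by
    rw [div_le_div_iff₀ (by linarith) (by norm_num)]; nlinarith
  have ht' : 9 * (8 * scale dm k) / u ≤ 8 * scale dm k / 32 := by
    rw [div_le_div_iff₀ (by linarith) (by norm_num)]; nlinarith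
  rw [scale_succ]
  linarith [quotientDist_le (s := gluingThreshold (Fintype.card X) dm (k + 1)) hd x v,
    hd.le_quotientDist_add (gluingThreshold_nonneg (Fintype.card X) hdm k) x v,
    card_sub_one_mul_gluingThreshold_le (Fintype.card X) hdm k]

lemma card_scaleEvent_le [DecidableEq X] (hd : IsMetric d) (hdm : 0 < dm) (hN : 0 < N) (x : X)
    {u : ℝ} (hu : 400 ≤ u) (k : ℕ) :
    (#{ω : Sample X N | ∃ y, d x y ≤ 9 * scale dm k / u ∧
        hstLabel d dm N ω k x ≠ hstLabel d dm N ω k y} : ℝ) ≤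
      Fintype.card (X ≃ Fin (Fintype.card X)) * (576 * N / u + 1) *
        (Real.log (coreCard d dm u x (k + 1)) - Real.log (coreCard d dm u x k)) := by
  set Δ := scale dm k
  set q := quotientDist d (gluingThreshold (Fintype.card X) dm k) x
  have hΔ : 0 < Δ := scale_pos hdm k
  have hNr : (0 : ℝ) < N := by exact_mod_cast hN
  have hgrid : 2 * (9 * Δ / u) / (Δ / (32 * N)) = 576 * N / u := by field_simp; ring
  have hcount := card_filter_clusterLabel_ne_le (ι := Fin (Fintype.card X)) (N := N)
    (s := gluingThreshold (Fintype.card X) dm k) hd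
    (a := Δ / 4) (h := Δ / (32 * N)) (b := 9 / 32 * Δ) (t := 9 * Δ / u) (by positivity)
    (by positivity) (by positivity) (radius_le hdm k) x
  rw [hgrid] at hcount
  have hharm := sum_inv_card_sublevel_le_log (q := q) (a := Δ / 4 - 9 * Δ / u)
    ⟨x, self_mem_core hd hdm (by linarith) x k⟩
    {w | Δ / 4 - 9 * Δ / u < q w ∧ q w ≤ 9 / 32 * Δ + 9 * Δ / u} fun w hw => (mem_filter.1 hw).2.1
  have hunion : (#{v | q v ≤ Δ / 4 - 9 * Δ / u} : ℝ) +
      #({w | Δ / 4 - 9 * Δ / u < q w ∧ q w ≤ 9 / 32 * Δ + 9 * Δ / u} : Finset X) ≤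
      coreCard d dm u x (k + 1) := by
    rw [← Nat.cast_add,
      ← card_union_of_disjoint (disjoint_filter.2 fun v _ h h' => by linarith [h'.1])]
    refine Nat.cast_le.2 ((card_le_card fun v hv => ?_).trans (card_le_coreCard_succ hd hdm hu x k))
    simp only [mem_union, mem_filter, mem_univ, true_and] at hv ⊢
    show q v ≤ 9 / 32 * Δ + 9 * Δ / u
    have : 0 ≤ 9 * Δ / u := by positivity
    rcases hv with hv | hv
    · linarith
    · exact hv.2
  have hA : (0 : ℝ) < #{v | q v ≤ Δ / 4 - 9 * Δ / u} := by
    exact_mod_cast coreCard_pos hd hdm (by linarith) x k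
  have hlog := Real.log_le_log (by positivity) hunion
  have hcore : (coreCard d dm u x k : ℝ) = #{v | q v ≤ Δ / 4 - 9 * Δ / u} := rfl
  rw [hcore]
  calc _ ≤ _ := hcount
    _ ≤ _ := by gcongr; exact hharm.trans (by linarith)

lemma card_tailEvent_le [DecidableEq X] (hd : IsMetric d) (hdm : 0 < dm) (hN : 0 < N)
    (hdmin : ∀ z w, z ≠ w → dm ≤ d z w) (x : X) {u : ℝ} (hu : 400 ≤ u) :
    (#{ω : Sample X N | u ≤ ⨆ y : {y // y ≠ x}, hstDist d dm M N ω x y / d x y} : ℝ) ≤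
      Fintype.card (X ≃ Fin (Fintype.card X)) * (576 * N / u + 1) *
        Real.log (Fintype.card X) := by
  set C : ℝ := Fintype.card (X ≃ Fin (Fintype.card X)) * (576 * N / u + 1)
  have hC : 0 ≤ C := by positivity
  have hsub : ({ω : Sample X N | u ≤ ⨆ y : {y // y ≠ x}, hstDist d dm M N ω x y / d x y} :
      Finset (Sample X N)) ⊆ (range M).biUnion fun k =>
        {ω | ∃ y, d x y ≤ 9 * scale dm k / u ∧ hstLabel d dm N ω k x ≠ hstLabel d dm N ω k y} := by
    intro ω hω
    replace hω := (mem_filter.1 hω).2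
    rcases isEmpty_or_nonempty {y // y ≠ x} with hempty | hne
    · rw [Real.iSup_of_isEmpty] at hω; linarith
    obtain ⟨⟨y, hyx⟩, hy⟩ := exists_eq_ciSup_of_finite
      (f := fun y : {y // y ≠ x} => hstDist d dm M N ω x y / d x y)
    rw [← hy, le_div_iff₀ (hd.pos hyx.symm)] at hω
    obtain ⟨k, hk, hxy⟩ :=
      exists_separatingScale_of_mul_dist_le hd hdmin ω hyx.symm (by linarith) hω
    obtain ⟨hkM, hne⟩ := mem_filter.1 hk
    exact mem_biUnion.2 ⟨k, hkM, mem_filter.2 ⟨mem_univ ω, y, hxy, hne⟩⟩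
  have hlog0 := Real.log_natCast_nonneg (coreCard d dm u x 0)
  have hlogM : Real.log (coreCard d dm u x M) ≤ Real.log (Fintype.card X) :=
    Real.log_le_log (by exact_mod_cast coreCard_pos hd hdm (by linarith) x M)
      (by exact_mod_cast card_le_univ _)
  calc _ ≤ ∑ k ∈ range M, (#{ω : Sample X N | ∃ y, d x y ≤ 9 * scale dm k / u ∧
          hstLabel d dm N ω k x ≠ hstLabel d dm N ω k y} : ℝ) := by
        exact_mod_cast (card_le_card hsub).trans card_biUnion_le
    _ ≤ ∑ k ∈ range M, C * (Real.log (coreCard d dm u x (k + 1)) -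
          Real.log (coreCard d dm u x k)) :=
        sum_le_sum fun k _ => card_scaleEvent_le hd hdm hN x hu k
    _ = C * (Real.log (coreCard d dm u x M) - Real.log (coreCard d dm u x 0)) := by
        rw [← mul_sum, sum_range_sub (fun k => Real.log (coreCard d dm u x k))]
    _ ≤ C * Real.log (Fintype.card X) := by gcongr; linarith

lemma card_tailEvent_div_card_le [DecidableEq X] (hd : IsMetric d) (hdm : 0 < dm)
    (hdmin : ∀ z w, z ≠ w → dm ≤ d z w) (hn : 2 ≤ Fintype.card X) (x : X) {u : ℝ} (hu : 0 < u) :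
    (#{ω : Sample X (64 * Fintype.card X) |
        u ≤ ⨆ y : {y // y ≠ x}, hstDist d dm M (64 * Fintype.card X) ω x y / d x y} : ℝ) /
      Fintype.card (Sample X (64 * Fintype.card X)) ≤ 600 * Real.log (Fintype.card X) / u := by
  set n := Fintype.card X
  have hn' : (2 : ℝ) ≤ n := by exact_mod_cast hn
  have hlog : Real.log 2 ≤ Real.log n := Real.log_le_log (by norm_num) hn'
  have hlog2 := Real.log_two_gt_d9
  have hperm : (0 : ℝ) < Fintype.card (X ≃ Fin n) := by
    exact_mod_cast Fintype.card_pos_iff.2 ⟨Fintype.equivFin X⟩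
  have hΩ : (Fintype.card (Sample X (64 * n)) : ℝ) = Fintype.card (X ≃ Fin n) * (64 * n) := by
    rw [Fintype.card_prod, Fintype.card_fin]; push_cast; ring
  by_cases hsmall : u ≤ 600 * Real.log n
  · refine (div_le_one_of_le₀ ?_ (by positivity)).trans ((one_le_div hu).2 hsmall)
    exact_mod_cast card_le_univ _
  by_cases hlarge : 32 * n < u
  · have hempty : ({ω : Sample X (64 * n) |
        u ≤ ⨆ y : {y // y ≠ x}, hstDist d dm M (64 * n) ω x y / d x y} : Finset _) = ∅ := by
      refine filter_eq_empty_iff.2 fun ω _ => not_le.2 (lt_of_le_of_lt ?_ hlarge)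
      refine Real.iSup_le (fun y => ?_) (by positivity)
      rw [div_le_iff₀ (hd.pos y.2.symm)]
      exact hstDist_le_mul_dist hd hdm hdmin ω y.2.symm
    rw [hempty, card_empty, Nat.cast_zero, zero_div]
    positivity
  push Not at hsmall hlarge
  have hcount :=
    card_tailEvent_le (M := M) (N := 64 * n) hd hdm (by omega) hdmin x (u := u) (by linarith)
  -- `N = 64 n ≥ 2u` keeps the `+ 1` (one grid value) of the per-scale count below `24 N / u`
  have hgrid : 576 * ((64 * n : ℕ) : ℝ) / u + 1 ≤ 600 * (64 * n) / u := by
    rw [← sub_nonneg]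
    have : 600 * (64 * n) / u - (576 * (64 * n) / u + 1) = (1536 * n - u) / u := by
      field_simp; ring
    push_cast
    rw [this]
    exact div_nonneg (by linarith) hu.le
  rw [div_le_iff₀ (by rw [hΩ]; positivity), hΩ]
  calc _ ≤ _ := hcount
    _ ≤ Fintype.card (X ≃ Fin n) * (600 * (64 * n) / u) * Real.log n := by
        gcongr
    _ = _ := by ring

end TailBound

lemma IsMetric.exists_pos_le_dist {X : Type*} [Fintype X] {d : X → X → ℝ} (hd : IsMetric d) :
    ∃ dm, 0 < dm ∧ ∀ z w, z ≠ w → dm ≤ d z w := by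
  classical
  rcases (univ.offDiag : Finset (X × X)).eq_empty_or_nonempty with h | h
  · refine ⟨1, one_pos, fun z w hzw => ?_⟩
    have : (z, w) ∈ (univ.offDiag : Finset (X × X)) := mem_offDiag.2 ⟨mem_univ z, mem_univ w, hzw⟩
    simp [h] at this
  obtain ⟨p, hp, hmin⟩ := univ.offDiag.exists_min_image (fun p : X × X => d p.1 p.2) h
  exact ⟨d p.1 p.2, hd.pos (mem_offDiag.1 hp).2.2,
    fun z w hzw => hmin (z, w) (mem_offDiag.2 ⟨mem_univ z, mem_univ w, hzw⟩)⟩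

lemma IsMetric.exists_le_scale {X : Type*} [Fintype X] {d : X → X → ℝ} (hd : IsMetric d)
    {dm : ℝ} (hdm : 0 < dm) : ∃ M, ∀ z w, d z w ≤ scale dm M / 4 := by
  obtain ⟨M, hM⟩ :=
    pow_unbounded_of_one_lt (4 * (∑ p : X × X, d p.1 p.2) / dm) (by norm_num : (1 : ℝ) < 8)
  refine ⟨M, fun z w => ?_⟩
  have hzw : d z w ≤ ∑ p : X × X, d p.1 p.2 :=
    single_le_sum (f := fun p : X × X => d p.1 p.2) (fun p _ => hd.nonneg _ _) (mem_univ (z, w))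
  rw [div_lt_iff₀ hdm] at hM
  unfold scale
  linarith

/-- Tail-bound version: there is a universal `C > 0` so that every `n`-point metric space
(`n ≥ 2`) admits a finitely supported distribution over dominating ultrametrics `ρ` with
`ρ ≤ 32 n d` off the diagonal, such that for every `x` and `u > 0` the probability that
the maximum gradient at `x` is at least `u` is at most `C (log n)/u`. -/
theorem maximum_gradient_tail_bound :
    ∃ C : ℝ, 0 < C ∧
      ∀ (X : Type) [Fintype X] (d : X → X → ℝ) (n : ℕ),
        Fintype.card X = n → 2 ≤ n → IsMetric d →
        ∃ (m : ℕ) (w : Fin m → ℝ) (ρ : Fin m → X → X → ℝ),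
          (∀ i, 0 ≤ w i) ∧ (∑ i, w i = 1) ∧
          (∀ i, w i ≠ 0 →
            IsMetric (ρ i) ∧ IsUltrametric (ρ i) ∧ (∀ x y, d x y ≤ ρ i x y) ∧
            (∀ x y, x ≠ y → ρ i x y ≤ 32 * n * d x y)) ∧
          (∀ x : X, ∀ u : ℝ, 0 < u →
            ∑ i ∈ Finset.univ.filter
                (fun i => u ≤ ⨆ y : {y : X // y ≠ x}, ρ i x y.1 / d x y.1), w i ≤
              C * Real.log n / u) := by
  classical
  refine ⟨600, by norm_num, fun X _ d n hcard hn hd => ?_⟩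
  subst hcard
  obtain ⟨dm, hdm, hdmin⟩ := hd.exists_pos_le_dist
  obtain ⟨M, hM⟩ := hd.exists_le_scale hdm
  set N := 64 * Fintype.card X
  set m := Fintype.card (Sample X N)
  set e := (Fintype.equivFin (Sample X N)).symm
  have : Nonempty (Sample X N) := ⟨(Fintype.equivFin X, ⟨0, by omega⟩)⟩
  have hm : (m : ℝ) ≠ 0 := Nat.cast_ne_zero.2 Fintype.card_ne_zero
  refine ⟨m, fun _ => (m : ℝ)⁻¹, fun i => hstDist d dm M N (e i), fun _ => by positivity,
    by simp [hm], fun i _ => ⟨hstDist_isMetric hdm _, hstDist_isUltrametric hdm _,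
      dist_le_hstDist hd hdm hM _, fun x y hxy => hstDist_le_mul_dist hd hdm hdmin _ hxy⟩,
    fun x u hu => ?_⟩
  have hcard : #{i | u ≤ ⨆ y : {y // y ≠ x}, hstDist d dm M N (e i) x y / d x y} =
      #{ω : Sample X N | u ≤ ⨆ y : {y // y ≠ x}, hstDist d dm M N ω x y / d x y} :=
    card_equiv e fun i => by simp
  rw [sum_const, nsmul_eq_mul, ← div_eq_mul_inv, hcard]
  exact card_tailEvent_div_card_le hd hdm hdmin hn x hu
end

section
/- Let X be a finite set, S a finite set (the space of possible clustering solutions), and Γ : X × MET(X) × S → [0,∞] a clustering cost function that is homogeneous (Γ(x, λd, P) = λ·Γ(x, d, P) for all λ > 0) and monotone (if d(x,y) ≤ d'(x,y) for all y ∈ X then Γ(x,d,P) ≤ Γ(x,d',P)). Define Opt_Γ(X,d) = min_{P ∈ S} Σ_{x∈X} Γ(x,d,P). Let D be a finitely supported probability distribution over metrics ρ on X such that each ρ in the support dominates d and such that for every x ∈ X, E_D[max_{y≠x} ρ(x,y)/d(x,y)] ≤ K for some K ≥ 1. Then E_D[Opt_Γ(X,ρ)] ≤ K·Opt_Γ(X,d).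 -/
/-- Reduction inequality for monotone clustering: if `Γ` is a homogeneous and monotone
clustering cost, and `D` is a finitely supported distribution over metrics dominating `d`
with expected maximum gradient at most `K` at every point, then
`E_D[Opt_Γ(X,ρ)] ≤ K · Opt_Γ(X,d)`. -/
theorem monotone_clustering_expectation_bound
    (X S : Type) [Fintype X] [Fintype S] [Nonempty S]
    (Γ : X → (X → X → ℝ) → S → ENNReal)
    (hhom : ∀ (x : X) (l : ℝ) (δ : X → X → ℝ) (P : S), 0 < l → IsMetric δ →
      Γ x (fun a b => l * δ a b) P = ENNReal.ofReal l * Γ x δ P)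
    (hmono : ∀ (x : X) (δ δ' : X → X → ℝ) (P : S), IsMetric δ → IsMetric δ' →
      (∀ y, δ x y ≤ δ' x y) → Γ x δ P ≤ Γ x δ' P)
    (d : X → X → ℝ) (hd : IsMetric d)
    (m : ℕ) (w : Fin m → ℝ) (ρ : Fin m → X → X → ℝ)
    (hw : ∀ i, 0 ≤ w i) (hw1 : ∑ i, w i = 1)
    (hρ : ∀ i, w i ≠ 0 → IsMetric (ρ i) ∧ ∀ x y, d x y ≤ ρ i x y)
    (K : ℝ) (hK : 1 ≤ K)
    (hgrad : ∀ x : X,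
      ∑ i, w i * (⨆ y : {y : X // y ≠ x}, ρ i x y.1 / d x y.1) ≤ K) :
    ∑ i, ENNReal.ofReal (w i) * (⨅ P : S, ∑ x, Γ x (ρ i) P) ≤
      ENNReal.ofReal K * ⨅ P : S, ∑ x, Γ x d P := by
  obtain ⟨P₀, hP₀⟩ : ∃ P₀ : S, (∑ x, Γ x d P₀) = ⨅ P : S, ∑ x, Γ x d P :=
    exists_eq_ciInf_of_finite
  set g : Fin m → X → ℝ :=
    fun i x => max (⨆ y : {y : X // y ≠ x}, ρ i x y.1 / d x y.1) 1 with hgdef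
  have hg1 : ∀ i x, 1 ≤ g i x := fun i x => le_max_right _ _
  have hg0 : ∀ i x, 0 ≤ g i x := fun i x => zero_le_one.trans (hg1 i x)
  -- per-point bound on Γ
  have key : ∀ (i : Fin m) (x : X), w i ≠ 0 →
      Γ x (ρ i) P₀ ≤ ENNReal.ofReal (g i x) * Γ x d P₀ := by
    intro i x hwi
    obtain ⟨hmet, hdom⟩ := hρ i hwi
    have hgpos : 0 < g i x := lt_of_lt_of_le one_pos (hg1 i x)
    have hscaled : IsMetric (fun a b => g i x * d a b) := by
      obtain ⟨h0, he, hs, ht⟩ := id hd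
      refine ⟨fun a b => mul_nonneg hgpos.le (h0 a b), fun a b => ?_,
        fun a b => by dsimp only; rw [hs a b], fun a b c => ?_⟩
      · rw [mul_eq_zero]
        constructor
        · rintro (h | h)
          · exact absurd h hgpos.ne'
          · exact (he a b).1 h
        · intro h; exact Or.inr ((he a b).2 h)
      · calc g i x * d a c ≤ g i x * (d a b + d b c) :=
              mul_le_mul_of_nonneg_left (ht a b c) hgpos.le
          _ = g i x * d a b + g i x * d b c := mul_add _ _ _
    have hle : ∀ y, ρ i x y ≤ g i x * d x y := by
      intro y
      by_cases hxy : y = x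
      · simp only [hxy, (hmet.2.1 x x).2 rfl, (hd.2.1 x x).2 rfl, mul_zero, le_refl]
      · have hdpos : 0 < d x y := by
          rcases lt_or_eq_of_le (hd.1 x y) with h | h
          · exact h
          · exact absurd ((hd.2.1 x y).1 h.symm).symm hxy
        have hsup : ρ i x y / d x y ≤ g i x :=
          le_trans (le_ciSup (f := fun y : {y : X // y ≠ x} => ρ i x y.1 / d x y.1)
            (Set.Finite.bddAbove (Set.finite_range _)) ⟨y, hxy⟩) (le_max_left _ _)
        calc ρ i x y = ρ i x y / d x y * d x y := by field_simp
          _ ≤ g i x * d x y := mul_le_mul_of_nonneg_right hsup hdpos.le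
    calc Γ x (ρ i) P₀ ≤ Γ x (fun a b => g i x * d a b) P₀ :=
          hmono x (ρ i) _ P₀ hmet hscaled hle
      _ = ENNReal.ofReal (g i x) * Γ x d P₀ := hhom x (g i x) d P₀ hgpos hd
  -- sum bound on g
  have hsumg : ∀ x : X, ∑ i, w i * g i x ≤ K := by
    intro x
    by_cases hne : Nonempty {y : X // y ≠ x}
    · refine le_trans (Finset.sum_le_sum fun i _ => ?_) (hgrad x)
      by_cases hwi : w i = 0
      · simp [hwi]
      · obtain ⟨hmet, hdom⟩ := hρ i hwi
        obtain ⟨y, hy⟩ := hne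
        have hdpos : 0 < d x y := by
          rcases lt_or_eq_of_le (hd.1 x y) with h | h
          · exact h
          · exact absurd ((hd.2.1 x y).1 h.symm).symm hy
        have h1 : (1 : ℝ) ≤ ρ i x y / d x y := (one_le_div hdpos).2 (hdom x y)
        have hs1 : (1 : ℝ) ≤ ⨆ y : {y : X // y ≠ x}, ρ i x y.1 / d x y.1 :=
          le_trans h1 (le_ciSup (f := fun y : {y : X // y ≠ x} => ρ i x y.1 / d x y.1)
            (Set.Finite.bddAbove (Set.finite_range _)) ⟨y, hy⟩)
        have : g i x = ⨆ y : {y : X // y ≠ x}, ρ i x y.1 / d x y.1 := max_eq_left hs1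
        rw [this]
    · have : ∀ i, g i x = 1 := by
        intro i
        have : IsEmpty {y : X // y ≠ x} := not_nonempty_iff.1 hne
        simp [hgdef, Real.iSup_of_isEmpty]
      simp only [this, mul_one]
      rw [hw1]; exact hK
  -- main chain
  calc ∑ i, ENNReal.ofReal (w i) * (⨅ P : S, ∑ x, Γ x (ρ i) P)
      ≤ ∑ i, ENNReal.ofReal (w i) * ∑ x, Γ x (ρ i) P₀ :=
        Finset.sum_le_sum fun i _ => mul_le_mul_right (iInf_le _ P₀) _
    _ = ∑ x, ∑ i, ENNReal.ofReal (w i) * Γ x (ρ i) P₀ := by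
        simp_rw [Finset.mul_sum]; exact Finset.sum_comm
    _ ≤ ∑ x, ∑ i, ENNReal.ofReal (w i) * (ENNReal.ofReal (g i x) * Γ x d P₀) := by
        refine Finset.sum_le_sum fun x _ => Finset.sum_le_sum fun i _ => ?_
        by_cases hwi : w i = 0
        · simp [hwi]
        · exact mul_le_mul_right (key i x hwi) _
    _ = ∑ x, ENNReal.ofReal (∑ i, w i * g i x) * Γ x d P₀ := by
        refine Finset.sum_congr rfl fun x _ => ?_
        rw [ENNReal.ofReal_sum_of_nonneg fun i _ => mul_nonneg (hw i) (hg0 i x),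
          Finset.sum_mul]
        refine Finset.sum_congr rfl fun i _ => ?_
        rw [ENNReal.ofReal_mul (hw i), mul_assoc]
    _ ≤ ∑ x, ENNReal.ofReal K * Γ x d P₀ :=
        Finset.sum_le_sum fun x _ =>
          mul_le_mul_left (ENNReal.ofReal_le_ofReal (hsumg x)) _
    _ = ENNReal.ofReal K * ∑ x, Γ x d P₀ := (Finset.mul_sum _ _ _).symm
    _ = ENNReal.ofReal K * ⨅ P : S, ∑ x, Γ x d P := by rw [hP₀]
end

section
/- Let (X, d_X) be a finite metric space and μ a positive measure on X. For every Δ > 0 there exists a finitely supported probability distribution over partitions P of X such that: every partition in the support is Δ-bounded (each part has diameter at most Δ); and for every x ∈ X and every t with 0 < t ≤ Δ/8, the probability that the closed ball B_X(x,t) is not contained in the part P(x) containing x is at most (16t/Δ)·log( μ(B_X(x,Δ)) / μ(B_X(x,Δ/8)) ). -/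
/-- The closed ball of radius `t` around `x`, as a finset. -/
noncomputable def cball {X : Type*} [Fintype X] (d : X → X → ℝ) (x : X) (t : ℝ) :
    Finset X :=
  Finset.univ.filter (fun y => d x y ≤ t)

/-!
Draw an ordering of `X` by sampling without replacement with probabilities proportional to `μ`,
and a radius `r` uniformly from `[Δ/4, Δ/2)`; every point joins the first center of the ordering
within distance `r`, so cells have diameter at most `2r < Δ`. If `B(x,t)` is cut, the first center
`c` within distance `r + t` of `x` comes first among the points of `B(x, d(x,c))`, and
`r ∈ [d(x,c) - t, d(x,c) + t)`. The first event has probability `μ c / μ(B(x, d(x,c)))`, the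
second, independent of it, at most `8t/Δ`; summing over the annulus `Δ/8 < d(x,c) ≤ Δ`
telescopes to at most `(8t/Δ) log (μ(B(x,Δ)) / μ(B(x,Δ/8)))`. The partition depends on `r` only
through the relation `d c y ≤ r`, which takes finitely many values, so the distribution is
finitely supported.
-/

open Finset MeasureTheory ProbabilityTheory
open scoped Classical

section IsMetric

variable {X : Type*} {d : X → X → ℝ}

lemma IsMetric.dist_nonneg (hd : IsMetric d) (x y : X) : 0 ≤ d x y := hd.1 x y

lemma IsMetric.dist_self (hd : IsMetric d) (x : X) : d x x = 0 := (hd.2.1 x x).2 rfl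

lemma IsMetric.dist_comm (hd : IsMetric d) (x y : X) : d x y = d y x := hd.2.2.1 x y

lemma IsMetric.dist_triangle (hd : IsMetric d) (x y z : X) : d x z ≤ d x y + d y z :=
  hd.2.2.2 x y z

end IsMetric

lemma mem_cball {X : Type*} [Fintype X] {d : X → X → ℝ} {x y : X} {t : ℝ} :
    y ∈ cball d x t ↔ d x y ≤ t := by
  simp [cball]

lemma List.find?_eq_some_of_imp {α : Type*} {l : List α} {p q : α → Bool} {b : α}
    (hp : l.find? p = some b) (hqb : q b) (hqp : ∀ a ∈ l, q a → p a) : l.find? q = some b := by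
  obtain ⟨-, as, bs, rfl, has⟩ := List.find?_eq_some_iff_append.1 hp
  refine List.find?_eq_some_iff_append.2 ⟨hqb, as, bs, rfl, fun a ha => ?_⟩
  have := has a ha
  have := hqp a (by simp [ha])
  cases h : q a <;> simp_all

namespace FRT

section Orderings

variable {X : Type*}

noncomputable def orderings (A : Finset X) : Finset (List X) :=
  if A = ∅ then {[]}
  else A.attach.biUnion fun a => (orderings (A.erase a)).image (a.1 :: ·)
termination_by A.card
decreasing_by exact card_erase_lt_of_mem a.2

lemma sum_orderings_of_nonempty {A : Finset X} (hA : A.Nonempty) {M : Type*} [AddCommMonoid M]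
    (f : List X → M) :
    ∑ l ∈ orderings A, f l = ∑ a ∈ A, ∑ l ∈ orderings (A.erase a), f (a :: l) := by
  rw [orderings, if_neg hA.ne_empty, sum_biUnion, ← sum_attach A]
  · exact sum_congr rfl fun a _ => sum_image fun _ _ _ _ h => List.cons_injective h
  · intro a _ b _ hab
    simp only [Function.onFun, disjoint_left, mem_image]
    rintro _ ⟨l, -, rfl⟩ ⟨l', -, h⟩
    exact hab (Subtype.ext (List.cons_eq_cons.1 h).1.symm)

lemma nodup_and_toFinset_eq_of_mem_orderings {A : Finset X} {l : List X}
    (hl : l ∈ orderings A) : l.Nodup ∧ l.toFinset = A := by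
  induction A using Finset.strongInduction generalizing l with
  | H A ih =>
    rw [orderings] at hl
    split_ifs at hl with hA
    · simp_all
    · obtain ⟨a, -, hl⟩ := mem_biUnion.1 hl
      obtain ⟨l', hl', rfl⟩ := mem_image.1 hl
      obtain ⟨hnd, hfin⟩ := ih _ (erase_ssubset a.2) hl'
      refine ⟨List.nodup_cons.2 ⟨fun h => ?_, hnd⟩, ?_⟩
      · simpa [hfin] using List.mem_toFinset.2 h
      · rw [List.toFinset_cons, hfin, insert_erase a.2]

lemma sum_map_eq_of_mem_orderings {A : Finset X} {l : List X} (hl : l ∈ orderings A)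
    (μ : X → ℝ) : (l.map μ).sum = ∑ y ∈ A, μ y := by
  obtain ⟨hnd, rfl⟩ := nodup_and_toFinset_eq_of_mem_orderings hl
  exact (List.sum_toFinset μ hnd).symm

lemma mem_of_mem_orderings_univ [Fintype X] {l : List X} (hl : l ∈ orderings univ) (z : X) :
    z ∈ l := by
  simp [← List.mem_toFinset, (nodup_and_toFinset_eq_of_mem_orderings hl).2]

/-- The probability of drawing the elements in the order `l` when sampling without replacement,
each time with probability proportional to `μ`. -/
noncomputable def orderWeight (μ : X → ℝ) : List X → ℝ
  | [] => 1
  | a :: l => μ a / ((a :: l).map μ).sum * orderWeight μ l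

lemma orderWeight_nonneg {μ : X → ℝ} (hμ : ∀ x, 0 ≤ μ x) : ∀ l : List X, 0 ≤ orderWeight μ l
  | [] => zero_le_one
  | a :: l => mul_nonneg
      (div_nonneg (hμ a) (List.sum_nonneg (by simp [hμ])))
      (orderWeight_nonneg hμ l)

lemma sum_orderings_orderWeight_mul {A : Finset X} (hA : A.Nonempty) (μ : X → ℝ)
    (g : List X → ℝ) :
    ∑ l ∈ orderings A, orderWeight μ l * g l =
      ∑ a ∈ A, μ a / (∑ y ∈ A, μ y) *
        ∑ l ∈ orderings (A.erase a), orderWeight μ l * g (a :: l) := by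
  rw [sum_orderings_of_nonempty hA]
  refine sum_congr rfl fun a ha => ?_
  rw [mul_sum]
  refine sum_congr rfl fun l hl => ?_
  rw [orderWeight, List.map_cons, List.sum_cons, sum_map_eq_of_mem_orderings hl,
    add_sum_erase _ _ ha, mul_assoc]

lemma sum_orderWeight {μ : X → ℝ} (hμ : ∀ x, 0 < μ x) (A : Finset X) :
    ∑ l ∈ orderings A, orderWeight μ l = 1 := by
  induction A using Finset.strongInduction with
  | H A ih =>
    rcases A.eq_empty_or_nonempty with rfl | hA
    · simp [orderings, orderWeight]
    · have h := sum_orderings_orderWeight_mul hA μ fun _ => 1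
      simp only [mul_one] at h
      rw [h, sum_congr rfl fun a ha => by rw [ih _ (erase_ssubset ha), mul_one], ← sum_div,
        div_self (sum_pos (fun y _ => hμ y) hA).ne']

lemma sum_orderWeight_mul_find?_eq_some {μ : X → ℝ} (hμ : ∀ x, 0 < μ x) {S A : Finset X}
    (hSA : S ⊆ A) {c : X} (hc : c ∈ S) :
    ∑ l ∈ orderings A, orderWeight μ l * (if l.find? (· ∈ S) = some c then 1 else 0) =
      μ c / ∑ y ∈ S, μ y := by
  induction A using Finset.strongInduction with
  | H A ih =>
    have hA : A.Nonempty := ⟨c, hSA hc⟩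
    have hApos : 0 < ∑ y ∈ A, μ y := sum_pos (fun y _ => hμ y) hA
    have hSpos : 0 < ∑ y ∈ S, μ y := sum_pos (fun y _ => hμ y) ⟨c, hc⟩
    -- Condition on the first draw `a`: if `a ∉ S`, the rest of the ordering faces the same
    -- question inside `A.erase a`.
    have hfirst : ∀ a ∈ A, ∑ l ∈ orderings (A.erase a),
        orderWeight μ l * (if (a :: l).find? (· ∈ S) = some c then 1 else 0) =
          if a ∈ S then (if a = c then 1 else 0) else μ c / ∑ y ∈ S, μ y := by
      intro a ha
      by_cases haS : a ∈ S
      · simp only [List.find?_cons_of_pos (p := (· ∈ S)) (decide_eq_true haS), Option.some_inj,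
          if_pos haS, ← sum_mul, sum_orderWeight hμ, one_mul]
      · simp only [List.find?_cons_of_neg (p := (· ∈ S)) (by simpa using haS), if_neg haS]
        exact ih _ (erase_ssubset ha) (subset_erase.2 ⟨hSA, haS⟩)
    have hinside : ∑ a ∈ S, μ a / (∑ y ∈ A, μ y) *
        (if a ∈ S then (if a = c then 1 else 0) else μ c / ∑ y ∈ S, μ y) =
          μ c / ∑ y ∈ A, μ y := by
      simp +contextual [hc]
    have houtside : ∑ a ∈ A \ S, μ a / (∑ y ∈ A, μ y) *
        (if a ∈ S then (if a = c then 1 else 0) else μ c / ∑ y ∈ S, μ y) =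
          (∑ y ∈ A, μ y - ∑ y ∈ S, μ y) / (∑ y ∈ A, μ y) * (μ c / ∑ y ∈ S, μ y) := by
      rw [← sum_sdiff_eq_sub hSA, sum_div, sum_mul]
      exact sum_congr rfl fun a ha => by rw [if_neg (mem_sdiff.1 ha).2]
    rw [sum_orderings_orderWeight_mul hA, sum_congr rfl fun a ha => by rw [hfirst a ha],
      ← sum_sdiff hSA, hinside, houtside]
    field_simp
    ring

end Orderings

section Clusters

variable {X : Type*}

def center (ρ : X → X → Bool) (l : List X) (y : X) : X :=
  (l.find? (ρ · y)).getD y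

noncomputable def withinRel (d : X → X → ℝ) (r : ℝ) (c y : X) : Bool :=
  decide (d c y ≤ r)

lemma rel_center {ρ : X → X → Bool} {l : List X} {y : X} (h : ∃ c ∈ l, ρ c y) :
    ρ (center ρ l y) y := by
  obtain ⟨c, hc⟩ := Option.isSome_iff_exists.1 (List.find?_isSome.2 h)
  simpa [center, hc] using List.find?_some hc

variable [Fintype X]

/-- For `ρ = withinRel d r` this is the FRT clustering: each point joins the cell of the first
center of `l` within distance `r`. -/
noncomputable def cluster (ρ : X → X → Bool) (l : List X) (y : X) : Finset X :=
  {z | center ρ l z = center ρ l y}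

lemma mem_cluster_self (ρ : X → X → Bool) (l : List X) (y : X) : y ∈ cluster ρ l y := by
  simp [cluster]

lemma cluster_eq_of_mem {ρ : X → X → Bool} {l : List X} {y z : X} (h : z ∈ cluster ρ l y) :
    cluster ρ l z = cluster ρ l y := by
  simp_all [cluster]

lemma dist_le_of_mem_cluster {d : X → X → ℝ} (hd : IsMetric d) {l : List X}
    (hl : ∀ z, z ∈ l) {r : ℝ} (hr : 0 ≤ r) {x a b : X} (ha : a ∈ cluster (withinRel d r) l x)
    (hb : b ∈ cluster (withinRel d r) l x) : d a b ≤ 2 * r := by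
  have hnear : ∀ y, d (center (withinRel d r) l y) y ≤ r := fun y => by
    have h : withinRel d r y y := by simp [withinRel, hd.dist_self y, hr]
    simpa [withinRel] using rel_center ⟨y, hl y, h⟩
  simp only [cluster, mem_filter, mem_univ, true_and] at ha hb
  set c := center (withinRel d r) l x
  have ha' : d c a ≤ r := ha ▸ hnear a
  have hb' : d c b ≤ r := hb ▸ hnear b
  linarith [hd.dist_triangle a c b, hd.dist_comm a c]

/-- The witness is the first center of `l` within distance `r + t` of `x`. -/
lemma exists_first_center_of_not_subset_cluster {d : X → X → ℝ} (hd : IsMetric d)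
    {l : List X} {x : X} (hx : x ∈ l) {r t : ℝ} (hrt : 0 ≤ r + t)
    (hcut : ¬ cball d x t ⊆ cluster (withinRel d r) l x) :
    ∃ c, l.find? (· ∈ cball d x (d x c)) = some c ∧ r ∈ Set.Ico (d x c - t) (d x c + t) := by
  obtain ⟨c, hc⟩ := Option.isSome_iff_exists.1
    (List.find?_isSome (p := (· ∈ cball d x (r + t))).2
      ⟨x, hx, by simp [mem_cball, hd.dist_self x, hrt]⟩)
  have hxc : d x c ≤ r + t := by simpa [mem_cball] using List.find?_some hc
  refine ⟨c, List.find?_eq_some_of_imp hc (by simp [mem_cball]) ?_, by linarith, ?_⟩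
  · intro a _ ha
    simp only [decide_eq_true_eq, mem_cball] at ha ⊢
    linarith
  · by_contra! hfar
    refine hcut fun y hy => ?_
    have hcenter : ∀ y, d x y ≤ t → center (withinRel d r) l y = c := fun y hy => by
      rw [center, List.find?_eq_some_of_imp hc]
      · rfl
      · simp only [withinRel, decide_eq_true_eq]
        linarith [hd.dist_triangle c x y, hd.dist_comm x c]
      · intro a _ ha
        simp only [withinRel, decide_eq_true_eq, mem_cball] at ha ⊢
        linarith [hd.dist_triangle x y a, hd.dist_comm y a]
    simp only [cluster, mem_filter, mem_univ, true_and]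
    rw [hcenter y (mem_cball.1 hy),
      hcenter x (by linarith [hd.dist_self x, hd.dist_nonneg x y, mem_cball.1 hy])]

end Clusters

lemma div_add_le_log_add_sub_log {m T : ℝ} (hm : 0 ≤ m) (hT : 0 < T) :
    m / (T + m) ≤ Real.log (T + m) - Real.log T := by
  have h := Real.one_sub_inv_le_log_of_pos (x := (T + m) / T) (by positivity)
  rwa [inv_div, Real.log_div (by positivity) hT.ne', one_sub_div (by positivity),
    add_sub_cancel_left] at h

/-- Each term is at most the increment of `log` over the mass accumulated before it, so the
sum telescopes. -/
lemma sum_div_le_log_sub_log {α : Type*} (s : Finset α) {μ v : α → ℝ} (key : α → ℝ)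
    (hμ : ∀ c ∈ s, 0 ≤ μ c) {base : ℝ} (hbase : 0 < base)
    (hv : ∀ c ∈ s, base + ∑ c' ∈ s with key c' ≤ key c, μ c' ≤ v c) :
    ∑ c ∈ s, μ c / v c ≤ Real.log (base + ∑ c ∈ s, μ c) - Real.log base := by
  induction s using Finset.induction_on_max_value key with
  | empty => simp
  | insert a s ha hmax ih =>
    have hμs : ∀ c ∈ s, 0 ≤ μ c := fun c hc => hμ c (mem_insert_of_mem hc)
    have hT : 0 < base + ∑ c ∈ s, μ c := add_pos_of_pos_of_nonneg hbase (sum_nonneg hμs)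
    have hva : base + ∑ c ∈ s, μ c + μ a ≤ v a := by
      have h := hv a (mem_insert_self a s)
      rwa [filter_true_of_mem fun c hc => (mem_insert.1 hc).elim (fun h => h ▸ le_rfl)
        (hmax c), sum_insert ha, add_comm (μ a), ← add_assoc] at h
    have hterm : μ a / v a ≤ μ a / (base + ∑ c ∈ s, μ c + μ a) :=
      div_le_div_of_nonneg_left (hμ a (mem_insert_self a s))
        (add_pos_of_pos_of_nonneg hT (hμ a (mem_insert_self a s))) hva
    have hrest := ih hμs fun c hc => le_trans (add_le_add le_rfl
      (sum_le_sum_of_subset_of_nonneg (filter_subset_filter _ (subset_insert a s))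
        fun c' hc' _ => hμ c' (mem_filter.1 hc').1)) (hv c (mem_insert_of_mem hc))
    have hlog := div_add_le_log_add_sub_log (hμ a (mem_insert_self a s)) hT
    rw [sum_insert ha, sum_insert ha, add_comm (μ a), ← add_assoc]
    linarith

section Annuli

variable {X : Type*} [Fintype X] {d : X → X → ℝ} {μ : X → ℝ}

lemma sum_cball_add_sum_le_sum_cball (hμ : ∀ y, 0 ≤ μ y) (x : X) {r ρ : ℝ} (hr : r ≤ ρ)
    {T : Finset X} (hT : ∀ c ∈ T, r < d x c ∧ d x c ≤ ρ) :
    ∑ y ∈ cball d x r, μ y + ∑ c ∈ T, μ c ≤ ∑ y ∈ cball d x ρ, μ y := by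
  rw [← sum_union (disjoint_left.2 fun y hy hyT => (hT y hyT).1.not_ge (mem_cball.1 hy))]
  refine sum_le_sum_of_subset_of_nonneg (union_subset (fun y hy => ?_) fun y hy => ?_)
    fun y _ _ => hμ y
  · exact mem_cball.2 ((mem_cball.1 hy).trans hr)
  · exact mem_cball.2 (hT y hy).2

lemma sum_annulus_div_le_log (hμ : ∀ y, 0 ≤ μ y) (x : X) {r₁ r₂ : ℝ} (hr : r₁ ≤ r₂)
    (hbase : 0 < ∑ y ∈ cball d x r₁, μ y) :
    ∑ c with r₁ < d x c ∧ d x c ≤ r₂, μ c / ∑ y ∈ cball d x (d x c), μ y ≤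
      Real.log ((∑ y ∈ cball d x r₂, μ y) / ∑ y ∈ cball d x r₁, μ y) := by
  refine (sum_div_le_log_sub_log _ (d x) (fun c _ => hμ c) hbase fun c hc => ?_).trans ?_
  · have hc := (mem_filter.1 hc).2
    refine sum_cball_add_sum_le_sum_cball hμ x hc.1.le fun c' hc' => ?_
    simp only [mem_filter, mem_univ, true_and] at hc'
    exact ⟨hc'.1.1, hc'.2⟩
  · have hle := sum_cball_add_sum_le_sum_cball hμ x hr (T := {c | r₁ < d x c ∧ d x c ≤ r₂})
      fun c hc => by simpa using hc
    have hpos : 0 < ∑ y ∈ cball d x r₁, μ y + ∑ c with r₁ < d x c ∧ d x c ≤ r₂, μ c :=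
      add_pos_of_pos_of_nonneg hbase (sum_nonneg fun c _ => hμ c)
    rw [← Real.log_div hpos.ne' hbase.ne']
    exact Real.log_le_log (div_pos hpos hbase) (by gcongr)

end Annuli

section RandomRadius

variable {X : Type*}

lemma measurable_withinRel (d : X → X → ℝ) : Measurable (withinRel d) := by
  refine measurable_pi_lambda _ fun c => measurable_pi_lambda _ fun y => measurable_to_bool ?_
  convert (measurableSet_Ici : MeasurableSet (Set.Ici (d c y))) using 1
  ext r
  simp [withinRel]

lemma sum_measureReal_withinRel_preimage [Fintype X] (d : X → X → ℝ) (ν : Measure ℝ)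
    [IsFiniteMeasure ν] (p : (X → X → Bool) → Prop) :
    ∑ ρ with p ρ, ν.real (withinRel d ⁻¹' {ρ}) = ν.real {r | p (withinRel d r)} := by
  rw [sum_measureReal_preimage_singleton _ fun ρ _ =>
    measurable_withinRel d (measurableSet_singleton ρ)]
  congr 1
  ext r
  simp

lemma measureReal_cond_Ico_le {ι : Type*} {a b t : ℝ} (hab : a < b) (ht : 0 ≤ t) {S : Set ℝ}
    {s : Finset ι} {f : ι → ℝ} (hS : Set.Ico a b ∩ S ⊆ ⋃ i ∈ s, Set.Ico (f i - t) (f i + t)) :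
    (volume[|Set.Ico a b]).real S ≤ #s * (2 * t) / (b - a) := by
  have hvol : volume.real (Set.Ico a b ∩ S) ≤ #s * (2 * t) := calc
    volume.real (Set.Ico a b ∩ S) ≤ volume.real (⋃ i ∈ s, Set.Ico (f i - t) (f i + t)) :=
      measureReal_mono hS (measure_biUnion_lt_top s.finite_toSet fun _ _ => by simp).ne
    _ ≤ ∑ i ∈ s, volume.real (Set.Ico (f i - t) (f i + t)) := measureReal_biUnion_finset_le _ _
    _ = #s * (2 * t) := by
      rw [sum_congr rfl fun i _ => (Real.volume_real_Ico_of_le (by linarith)).trans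
        (by ring : f i + t - (f i - t) = 2 * t), sum_const, nsmul_eq_mul]
  rw [measureReal_def, cond_apply measurableSet_Ico, ENNReal.toReal_mul, ENNReal.toReal_inv,
    Real.volume_Ico, ENNReal.toReal_ofReal (sub_pos.2 hab).le, ← measureReal_def, inv_mul_eq_div]
  exact div_le_div_of_nonneg_right hvol (sub_pos.2 hab).le

lemma isProbabilityMeasure_cond_Ico {a b : ℝ} (hab : a < b) :
    IsProbabilityMeasure (volume[|Set.Ico a b]) :=
  cond_isProbabilityMeasure_of_finite (by simpa using hab) (by simp)

end RandomRadius

section Decomposition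

variable {X : Type*} [Fintype X] {d : X → X → ℝ} {μ : X → ℝ} {Δ : ℝ}

abbrev FRTIndex (X : Type*) [Fintype X] := orderings (univ : Finset X) × (X → X → Bool)

/-- A partition is indexed by an ordering `l` of `X` and a relation `ρ`; it gets the probability
that a `μ`-biased random ordering is `l` and that `withinRel d r = ρ` for `r` uniform on
`[Δ/4, Δ/2)`. -/
noncomputable def frtWeight (d : X → X → ℝ) (μ : X → ℝ) (Δ : ℝ) (i : FRTIndex X) : ℝ :=
  orderWeight μ i.1 * (volume[|Set.Ico (Δ / 4) (Δ / 2)]).real (withinRel d ⁻¹' {i.2})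

noncomputable def frtPart (i : FRTIndex X) : X → Finset X :=
  cluster i.2 i.1

lemma frtWeight_nonneg (hμ : ∀ x, 0 ≤ μ x) (i : FRTIndex X) : 0 ≤ frtWeight d μ Δ i :=
  mul_nonneg (orderWeight_nonneg hμ _) measureReal_nonneg

lemma sum_frtWeight (hμ : ∀ x, 0 < μ x) (hΔ : 0 < Δ) : ∑ i, frtWeight d μ Δ i = 1 := by
  have := isProbabilityMeasure_cond_Ico (show Δ / 4 < Δ / 2 by linarith)
  have hradius : ∑ ρ, (volume[|Set.Ico (Δ / 4) (Δ / 2)]).real (withinRel d ⁻¹' {ρ}) = 1 := by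
    simpa using sum_measureReal_withinRel_preimage d (volume[|Set.Ico (Δ / 4) (Δ / 2)])
      fun _ => True
  simp only [frtWeight, Fintype.sum_prod_type, ← mul_sum, hradius, mul_one]
  exact (sum_coe_sort _ (orderWeight μ)).trans (sum_orderWeight hμ _)

lemma exists_radius_of_frtWeight_ne_zero {i : FRTIndex X} (h : frtWeight d μ Δ i ≠ 0) :
    ∃ r ∈ Set.Ico (Δ / 4) (Δ / 2), withinRel d r = i.2 := by
  by_contra! hnone
  refine h (mul_eq_zero_of_right _ ?_)
  have hempty : Set.Ico (Δ / 4) (Δ / 2) ∩ withinRel d ⁻¹' {i.2} = ∅ :=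
    Set.eq_empty_of_forall_notMem fun r hr => hnone r hr.1 hr.2
  simp [measureReal_def, cond_apply measurableSet_Ico, hempty]

lemma frtPart_isPartition (hd : IsMetric d) (hΔ : 0 < Δ) {i : FRTIndex X}
    (h : frtWeight d μ Δ i ≠ 0) :
    (∀ x, x ∈ frtPart i x) ∧ (∀ x y, y ∈ frtPart i x → frtPart i y = frtPart i x) ∧
      (∀ x, ∀ a ∈ frtPart i x, ∀ b ∈ frtPart i x, d a b ≤ Δ) := by
  obtain ⟨r, hr, hρ⟩ := exists_radius_of_frtWeight_ne_zero h
  refine ⟨mem_cluster_self _ _, fun _ _ => cluster_eq_of_mem, fun x a ha b hb => ?_⟩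
  rw [frtPart, ← hρ] at ha hb
  linarith [dist_le_of_mem_cluster hd (mem_of_mem_orderings_univ i.1.2) (by linarith [hr.1])
    ha hb, hr.2]

lemma measureReal_not_subset_cluster_le (hd : IsMetric d) {l : List X} (hl : ∀ z, z ∈ l)
    (x : X) {t : ℝ} (ht : 0 < t) (htΔ : t ≤ Δ / 8) :
    (volume[|Set.Ico (Δ / 4) (Δ / 2)]).real {r | ¬ cball d x t ⊆ cluster (withinRel d r) l x} ≤
      8 * t / Δ * ∑ c with Δ / 8 < d x c ∧ d x c ≤ Δ,
        (if l.find? (· ∈ cball d x (d x c)) = some c then 1 else 0) := by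
  have hbound := measureReal_cond_Ico_le (S := {r | ¬ cball d x t ⊆ cluster (withinRel d r) l x})
    (s := {c | (Δ / 8 < d x c ∧ d x c ≤ Δ) ∧ l.find? (· ∈ cball d x (d x c)) = some c})
    (f := d x) (show Δ / 4 < Δ / 2 by linarith) ht.le fun r ⟨hr, hcut⟩ => by
      obtain ⟨c, hc, hrc⟩ := exists_first_center_of_not_subset_cluster hd (hl x)
        (by linarith [hr.1]) hcut
      refine Set.mem_biUnion ?_ hrc
      simp only [coe_filter, mem_univ, true_and, Set.mem_ofPred_eq]
      exact ⟨⟨by linarith [hr.1, hrc.2], by linarith [hr.2, hrc.1]⟩, hc⟩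
  rw [sum_boole, filter_filter]
  convert hbound using 1
  ring

lemma sum_frtWeight_not_subset_le (hd : IsMetric d) (hμ : ∀ x, 0 < μ x) (x : X) {t : ℝ}
    (ht : 0 < t) (htΔ : t ≤ Δ / 8) :
    ∑ i with ¬ cball d x t ⊆ frtPart i x, frtWeight d μ Δ i ≤
      8 * t / Δ * ∑ c with Δ / 8 < d x c ∧ d x c ≤ Δ, μ c / ∑ y ∈ cball d x (d x c), μ y := by
  set ν := volume[|Set.Ico (Δ / 4) (Δ / 2)]
  calc ∑ i with ¬ cball d x t ⊆ frtPart i x, frtWeight d μ Δ i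
      = ∑ l ∈ orderings univ, orderWeight μ l *
          ν.real {r | ¬ cball d x t ⊆ cluster (withinRel d r) l x} := by
        rw [sum_filter, Fintype.sum_prod_type, ← sum_coe_sort (orderings univ)]
        refine sum_congr rfl fun l _ => ?_
        rw [← sum_measureReal_withinRel_preimage d ν fun ρ => ¬ cball d x t ⊆ cluster ρ l x,
          mul_sum, sum_filter]
        exact sum_congr rfl fun ρ _ => by simp only [frtPart, frtWeight]; congr
    _ ≤ ∑ l ∈ orderings univ, orderWeight μ l * (8 * t / Δ * ∑ c with Δ / 8 < d x c ∧ d x c ≤ Δ,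
          (if l.find? (· ∈ cball d x (d x c)) = some c then 1 else 0)) :=
        sum_le_sum fun l hl => mul_le_mul_of_nonneg_left
          (measureReal_not_subset_cluster_le hd (mem_of_mem_orderings_univ hl) x ht htΔ)
          (orderWeight_nonneg (fun y => (hμ y).le) l)
    _ = 8 * t / Δ * ∑ c with Δ / 8 < d x c ∧ d x c ≤ Δ, ∑ l ∈ orderings univ,
          orderWeight μ l * (if l.find? (· ∈ cball d x (d x c)) = some c then 1 else 0) := by
        simp only [mul_sum]
        rw [sum_comm]
        simp only [mul_left_comm]
    _ = 8 * t / Δ * ∑ c with Δ / 8 < d x c ∧ d x c ≤ Δ, μ c / ∑ y ∈ cball d x (d x c), μ y := by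
        congr 1
        exact sum_congr rfl fun c _ => sum_orderWeight_mul_find?_eq_some hμ (subset_univ _)
          (mem_cball.2 le_rfl)

end Decomposition

end FRT

open FRT

open Classical in
/-- Padded stochastic decomposition of Fakcharoenphol–Rao–Talwar (with general measures):
for every `Δ > 0` there is a finitely supported distribution over `Δ`-bounded partitions
(encoded by their cell maps `x ↦ Part i x`) such that for every `x` and `0 < t ≤ Δ/8`, the
probability of `B(x,t) ⊄ P(x)` is at most `(16t/Δ)·log(μ(B(x,Δ))/μ(B(x,Δ/8)))`. -/
theorem frt_padded_decomposition
    (X : Type) [Fintype X] (d : X → X → ℝ) (hd : IsMetric d)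
    (μ : X → ℝ) (hμ : ∀ x, 0 < μ x) (Δ : ℝ) (hΔ : 0 < Δ) :
    ∃ (m : ℕ) (w : Fin m → ℝ) (Part : Fin m → X → Finset X),
      (∀ i, 0 ≤ w i) ∧ (∑ i, w i = 1) ∧
      (∀ i, w i ≠ 0 →
        (∀ x, x ∈ Part i x) ∧ (∀ x y, y ∈ Part i x → Part i y = Part i x) ∧
        (∀ x, ∀ a ∈ Part i x, ∀ b ∈ Part i x, d a b ≤ Δ)) ∧
      (∀ x : X, ∀ t : ℝ, 0 < t → t ≤ Δ / 8 →
        ∑ i ∈ Finset.univ.filter (fun i => ¬ cball d x t ⊆ Part i x), w i ≤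
          (16 * t / Δ) *
            Real.log ((∑ y ∈ cball d x Δ, μ y) / (∑ y ∈ cball d x (Δ / 8), μ y))) := by
  let e := (Fintype.equivFin (FRTIndex X)).symm
  refine ⟨_, fun i => frtWeight d μ Δ (e i), fun i => frtPart (e i),
    fun i => frtWeight_nonneg (fun x => (hμ x).le) _, ?_,
    fun i hi => frtPart_isPartition hd hΔ hi, fun x t ht htΔ => ?_⟩
  · rw [e.sum_comp (frtWeight d μ Δ)]
    exact sum_frtWeight hμ hΔ
  have hbase : 0 < ∑ y ∈ cball d x (Δ / 8), μ y :=
    Finset.sum_pos (fun y _ => hμ y) ⟨x, mem_cball.2 (by linarith [hd.dist_self x])⟩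
  have hlog := sum_annulus_div_le_log (fun y => (hμ y).le) x (r₂ := Δ) (by linarith) hbase
  have hannulus : 0 ≤ ∑ c with Δ / 8 < d x c ∧ d x c ≤ Δ, μ c / ∑ y ∈ cball d x (d x c), μ y :=
    Finset.sum_nonneg fun c _ => div_nonneg (hμ c).le
      (Finset.sum_nonneg fun y _ => (hμ y).le)
  rw [Finset.sum_filter, e.sum_comp fun i => if ¬ cball d x t ⊆ frtPart i x then
    frtWeight d μ Δ i else 0, ← Finset.sum_filter]
  calc _ ≤ 8 * t / Δ * ∑ c with Δ / 8 < d x c ∧ d x c ≤ Δ,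
          μ c / ∑ y ∈ cball d x (d x c), μ y := sum_frtWeight_not_subset_le hd hμ x ht htΔ
    _ ≤ 8 * t / Δ * Real.log ((∑ y ∈ cball d x Δ, μ y) / ∑ y ∈ cball d x (Δ / 8), μ y) :=
        mul_le_mul_of_nonneg_left hlog (by positivity)
    _ ≤ 16 * t / Δ * Real.log ((∑ y ∈ cball d x Δ, μ y) / ∑ y ∈ cball d x (Δ / 8), μ y) :=
        mul_le_mul_of_nonneg_right (by gcongr; linarith) (hannulus.trans hlog)
end

section
/- Let n > 3, let C_n denote the n-point cycle, i.e. the set Z/nZ with metric d_{C_n}(i,j) = min{|i−j| mod n, n − (|i−j| mod n)} (the shortest-path metric of the unweighted n-cycle). Let (T, d_T) be a finite metric space satisfying the four-point condition, and let g : C_n → T be non-contractive (d_T(g(i),g(j)) ≥ d_{C_n}(i,j) for all i,j). Then there exists x ∈ Z/nZ such that d_T(g(x), g(x+1)) ≥ n/3 − 1. -/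
/-- `ρ` satisfies the four-point condition (tree metric). -/
def FourPointCond {X : Type*} (ρ : X → X → ℝ) : Prop :=
  ∀ w x y z, ρ w x + ρ y z ≤ max (ρ w y + ρ x z) (ρ w z + ρ x y)

/-- The shortest-path metric of the unweighted `n`-cycle on `ZMod n`:
`d(i,j) = min((i−j) mod n, (j−i) mod n)`. -/
def cycleDist (n : ℕ) (i j : ZMod n) : ℝ := (min (i - j).val (j - i).val : ℕ)

noncomputable def rrGP {T : Type*} (d : T → T → ℝ) (w u v : T) : ℝ :=
  (d w u + d w v - d u v) / 2

lemma rrGP_symm {T : Type*} (d : T → T → ℝ) (hs : ∀ x y, d x y = d y x) (w u v : T) :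
    rrGP d w u v = rrGP d w v u := by
  simp only [rrGP]; rw [hs u v]; ring

lemma rrHyp {T : Type*} (d : T → T → ℝ) (hf : FourPointCond d)
    (hs : ∀ x y, d x y = d y x) (w u s v : T) :
    min (rrGP d w u s) (rrGP d w s v) ≤ rrGP d w u v := by
  rcases le_max_iff.mp (hf u v w s) with h | h
  · refine le_trans (min_le_right _ _) ?_
    have h1 := hs u w
    have h2 := hs v s
    simp only [rrGP]
    linarith
  · refine le_trans (min_le_left _ _) ?_
    have h1 := hs v w
    simp only [rrGP]
    linarith

/-- Crossing lemma: a path `p 0, …, p k` from `x` to `y` passes (in the virtual-median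
sense) within `K/2` of the median of `(x, y, W)`. -/
lemma rrCrossing {T : Type*} (d : T → T → ℝ) (hf : FourPointCond d)
    (hs : ∀ x y, d x y = d y x)
    (h00 : ∀ x, d x x = 0) (htri : ∀ x y z, d x z ≤ d x y + d y z)
    (W : T) (p : ℕ → T) (k : ℕ) (K : ℝ) (hK : 0 ≤ K)
    (hedge : ∀ j, j < k → d (p j) (p (j+1)) ≤ K)
    (x y : T) (hx : p 0 = x) (hy : p k = y) :
    ∃ s, s ≤ k ∧
      d W (p s) + rrGP d W x y
        - 2 * min (rrGP d W (p s) x) (rrGP d W (p s) y) ≤ K / 2 := by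
  subst hx; subst hy
  have main : ∀ j, j ≤ k →
      (∃ s, s ≤ k ∧ d W (p s) + rrGP d W (p 0) (p k)
          - 2 * min (rrGP d W (p s) (p 0)) (rrGP d W (p s) (p k)) ≤ K / 2)
      ∨ (rrGP d W (p j) (p k) ≤ rrGP d W (p 0) (p k)
          ∧ rrGP d W (p j) (p k) ≤ rrGP d W (p j) (p 0)) := by
    intro j
    induction j with
    | zero =>
      intro _
      right
      refine ⟨le_refl _, ?_⟩
      have h1 : rrGP d W (p 0) (p 0) = d W (p 0) := by
        simp only [rrGP]; rw [h00]; ring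
      have h2 : rrGP d W (p 0) (p k) ≤ d W (p 0) := by
        have := htri W (p 0) (p k)
        simp only [rrGP]
        linarith
      rw [h1]; exact h2
    | succ j ih =>
      intro hjk
      have hj : j ≤ k := Nat.le_of_succ_le hjk
      rcases ih hj with found | ⟨hb, hab⟩
      · exact Or.inl found
      by_cases hD :
          (d W (p j) + rrGP d W (p 0) (p k)
            - 2 * min (rrGP d W (p j) (p 0)) (rrGP d W (p j) (p k)))
          + (d W (p (j+1)) + rrGP d W (p 0) (p k)
            - 2 * min (rrGP d W (p (j+1)) (p 0)) (rrGP d W (p (j+1)) (p k)))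
          ≤ d (p j) (p (j+1))
      · left
        have he := hedge j hjk
        rcases le_total
            (d W (p j) + rrGP d W (p 0) (p k)
              - 2 * min (rrGP d W (p j) (p 0)) (rrGP d W (p j) (p k)))
            (d W (p (j+1)) + rrGP d W (p 0) (p k)
              - 2 * min (rrGP d W (p (j+1)) (p 0)) (rrGP d W (p (j+1)) (p k)))
            with h | h
        · exact ⟨j, hj, by linarith⟩
        · exact ⟨j+1, hjk, by linarith⟩
      · right
        push_neg at hD
        have hqid : d (p j) (p (j+1))
            = d W (p j) + d W (p (j+1)) - 2 * rrGP d W (p j) (p (j+1)) := by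
          simp only [rrGP]; ring
        have hmuj : min (rrGP d W (p j) (p 0)) (rrGP d W (p j) (p k))
            = rrGP d W (p j) (p k) := min_eq_right hab
        have hmin1 : min (rrGP d W (p (j+1)) (p k)) (rrGP d W (p k) (p 0))
            ≤ rrGP d W (p (j+1)) (p 0) := rrHyp d hf hs W (p (j+1)) (p k) (p 0)
        rw [rrGP_symm d hs W (p k) (p 0)] at hmin1
        have hmin2 : min (rrGP d W (p 0) (p (j+1))) (rrGP d W (p (j+1)) (p k))
            ≤ rrGP d W (p 0) (p k) := rrHyp d hf hs W (p 0) (p (j+1)) (p k)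
        rw [rrGP_symm d hs W (p 0) (p (j+1))] at hmin2
        have hmin3 : min (rrGP d W (p j) (p (j+1))) (rrGP d W (p (j+1)) (p k))
            ≤ rrGP d W (p j) (p k) := rrHyp d hf hs W (p j) (p (j+1)) (p k)
        rw [hmuj] at hD
        have hdag : rrGP d W (p j) (p k)
            + min (rrGP d W (p (j+1)) (p 0)) (rrGP d W (p (j+1)) (p k))
            < rrGP d W (p j) (p (j+1)) + rrGP d W (p 0) (p k) := by
          linarith
        have hb1c : rrGP d W (p (j+1)) (p k) ≤ rrGP d W (p 0) (p k) := by
          by_contra hcon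
          push_neg at hcon
          have ha1c : rrGP d W (p 0) (p k) ≤ rrGP d W (p (j+1)) (p 0) := by
            have hm : min (rrGP d W (p (j+1)) (p k)) (rrGP d W (p 0) (p k))
                = rrGP d W (p 0) (p k) := min_eq_right hcon.le
            rw [hm] at hmin1; exact hmin1
          have hmu1 : min (rrGP d W (p (j+1)) (p 0)) (rrGP d W (p (j+1)) (p k))
              = rrGP d W (p 0) (p k) :=
            le_antisymm hmin2 (le_min ha1c hcon.le)
          have hbj_lt : rrGP d W (p j) (p k) < rrGP d W (p j) (p (j+1)) := by
            rw [hmu1] at hdag; linarith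
          have hlt : rrGP d W (p j) (p k)
              < min (rrGP d W (p j) (p (j+1))) (rrGP d W (p (j+1)) (p k)) :=
            lt_min hbj_lt (lt_of_le_of_lt hb hcon)
          exact absurd hmin3 (not_le.mpr hlt)
        refine ⟨hb1c, ?_⟩
        have hm : min (rrGP d W (p (j+1)) (p k)) (rrGP d W (p 0) (p k))
            = rrGP d W (p (j+1)) (p k) := min_eq_left hb1c
        rw [hm] at hmin1; exact hmin1
  rcases main k (le_refl k) with found | ⟨hb, -⟩
  · exact found
  · refine ⟨k, le_refl k, ?_⟩
    have h1 : rrGP d W (p k) (p k) = d W (p k) := by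
      simp only [rrGP]; rw [h00]; ring
    have h2 : rrGP d W (p 0) (p k) ≤ d W (p k) := by
      have t := htri W (p k) (p 0)
      have s0 := hs (p k) (p 0)
      simp only [rrGP]
      linarith
    rw [h1] at hb
    have hc : rrGP d W (p 0) (p k) = d W (p k) := le_antisymm h2 hb
    rw [rrGP_symm d hs W (p k) (p 0), h1, hc, min_self]
    linarith

/-- All three Gromov products at `p` of pairs from `{W, X, Y}` are bounded by the
virtual distance from `p` to the median of `(X, Y, W)` as seen from basepoint `W`. -/
lemma rrComp {T : Type*} (d : T → T → ℝ) (hf : FourPointCond d)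
    (hs : ∀ x y, d x y = d y x) (W X Y p : T) :
    rrGP d p X Y ≤ d W p + rrGP d W X Y - 2 * min (rrGP d W p X) (rrGP d W p Y) ∧
    rrGP d p Y W ≤ d W p + rrGP d W X Y - 2 * min (rrGP d W p X) (rrGP d W p Y) ∧
    rrGP d p W X ≤ d W p + rrGP d W X Y - 2 * min (rrGP d W p X) (rrGP d W p Y) := by
  have hA : min (rrGP d W p X) (rrGP d W p Y) ≤ rrGP d W X Y := by
    have h := rrHyp d hf hs W X p Y
    rw [rrGP_symm d hs W X p] at h
    exact h
  have hl := min_le_left (rrGP d W p X) (rrGP d W p Y)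
  have hr := min_le_right (rrGP d W p X) (rrGP d W p Y)
  refine ⟨?_, ?_, ?_⟩
  · have hid : rrGP d p X Y
        = d W p + rrGP d W X Y - rrGP d W p X - rrGP d W p Y := by
      simp only [rrGP]; ring
    linarith
  · have h1 := hs p W
    have h2 := hs Y W
    simp only [rrGP] at hr hA ⊢
    linarith
  · have h1 := hs p W
    simp only [rrGP] at hl hA ⊢
    linarith

lemma rrKey0 (α β γ e f g M : ℝ) (he : e ≤ M) (hf' : f ≤ M) (hg : g ≤ M)
    (h1 : min α β ≤ e) (h2 : min β γ ≤ f) (h3 : min α γ ≤ g)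
    (ha : α ≤ γ) (hb : β ≤ γ) :
    α + β ≤ M + e ∨ β + γ ≤ M + f ∨ α + γ ≤ M + g := by
  rw [min_eq_left ha] at h3
  rcases le_or_gt γ f with hgf | hgf
  · right; right; linarith
  · have hbf : β ≤ f := by rw [min_eq_left hb] at h2; exact h2
    rcases le_or_gt γ g with hgg | hgg
    · right; right; linarith
    · left
      rcases le_total α β with hab | hab
      · rw [min_eq_left hab] at h1; linarith
      · rw [min_eq_right hab] at h1; linarith

/-- Any two points are within the sum of their virtual distances to the median of
`(X, Y, Z)`. -/
lemma rrPair {T : Type*} (d : T → T → ℝ) (hf : FourPointCond d)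
    (hs : ∀ x y, d x y = d y x) (X Y Z u v : T) :
    d u v ≤ max (rrGP d u X Y) (max (rrGP d u Y Z) (rrGP d u Z X))
          + max (rrGP d v X Y) (max (rrGP d v Y Z) (rrGP d v Z X)) := by
  have h1 : min (rrGP d u v X) (rrGP d u v Y) ≤ rrGP d u X Y := by
    have h := rrHyp d hf hs u X v Y
    rw [rrGP_symm d hs u X v] at h; exact h
  have h2 : min (rrGP d u v Y) (rrGP d u v Z) ≤ rrGP d u Y Z := by
    have h := rrHyp d hf hs u Y v Z
    rw [rrGP_symm d hs u Y v] at h; exact h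
  have h3 : min (rrGP d u v X) (rrGP d u v Z) ≤ rrGP d u Z X := by
    have h := rrHyp d hf hs u Z v X
    rw [rrGP_symm d hs u Z v, min_comm] at h; exact h
  have he : rrGP d u X Y ≤ max (rrGP d u X Y) (max (rrGP d u Y Z) (rrGP d u Z X)) :=
    le_max_left _ _
  have hf2 : rrGP d u Y Z ≤ max (rrGP d u X Y) (max (rrGP d u Y Z) (rrGP d u Z X)) :=
    le_trans (le_max_left _ _) (le_max_right _ _)
  have hg2 : rrGP d u Z X ≤ max (rrGP d u X Y) (max (rrGP d u Y Z) (rrGP d u Z X)) :=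
    le_trans (le_max_right _ _) (le_max_right _ _)
  set Mu := max (rrGP d u X Y) (max (rrGP d u Y Z) (rrGP d u Z X)) with hMu
  have hdisj : rrGP d u v X + rrGP d u v Y ≤ Mu + rrGP d u X Y
      ∨ rrGP d u v Y + rrGP d u v Z ≤ Mu + rrGP d u Y Z
      ∨ rrGP d u v X + rrGP d u v Z ≤ Mu + rrGP d u Z X := by
    rcases le_total (rrGP d u v X) (rrGP d u v Y) with hxy | hxy
    · rcases le_total (rrGP d u v Y) (rrGP d u v Z) with hyz | hyz
      · exact rrKey0 _ _ _ _ _ _ Mu he hf2 hg2 h1 h2 h3 (le_trans hxy hyz) hyz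
      · rcases rrKey0 (rrGP d u v X) (rrGP d u v Z) (rrGP d u v Y)
            (rrGP d u Z X) (rrGP d u Y Z) (rrGP d u X Y) Mu hg2 hf2 he h3
            (by rw [min_comm]; exact h2) h1 hxy hyz with c | c | c
        · right; right; exact c
        · right; left; linarith
        · left; exact c
    · rcases le_total (rrGP d u v X) (rrGP d u v Z) with hxz | hxz
      · exact rrKey0 _ _ _ _ _ _ Mu he hf2 hg2 h1 h2 h3 hxz (le_trans hxy hxz)
      · rcases rrKey0 (rrGP d u v Y) (rrGP d u v Z) (rrGP d u v X)
            (rrGP d u Y Z) (rrGP d u Z X) (rrGP d u X Y) Mu hf2 hg2 he h2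
            (by rw [min_comm]; exact h3) (by rw [min_comm]; exact h1) hxy hxz
            with c | c | c
        · right; left; exact c
        · right; right; linarith
        · left; linarith
  have idXY : rrGP d v X Y
      = d u v + rrGP d u X Y - rrGP d u v X - rrGP d u v Y := by
    simp only [rrGP]; ring
  have idYZ : rrGP d v Y Z
      = d u v + rrGP d u Y Z - rrGP d u v Y - rrGP d u v Z := by
    simp only [rrGP]; ring
  have idZX : rrGP d v Z X
      = d u v + rrGP d u Z X - rrGP d u v Z - rrGP d u v X := by
    simp only [rrGP]; ring
  have hvXY : rrGP d v X Y ≤ max (rrGP d v X Y) (max (rrGP d v Y Z) (rrGP d v Z X)) :=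
    le_max_left _ _
  have hvYZ : rrGP d v Y Z ≤ max (rrGP d v X Y) (max (rrGP d v Y Z) (rrGP d v Z X)) :=
    le_trans (le_max_left _ _) (le_max_right _ _)
  have hvZX : rrGP d v Z X ≤ max (rrGP d v X Y) (max (rrGP d v Y Z) (rrGP d v Z X)) :=
    le_trans (le_max_right _ _) (le_max_right _ _)
  rcases hdisj with c | c | c
  · linarith
  · linarith
  · linarith

lemma rrCycleCast (n u v : ℕ) (hn : 0 < n) (huv : u ≤ v) (hv : v ≤ n) :
    cycleDist n (u : ZMod n) (v : ZMod n) = ((min (v - u) (n - (v - u)) : ℕ) : ℝ) := by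
  haveI : NeZero n := ⟨hn.ne'⟩
  have e2 : ((v : ZMod n) - (u : ZMod n)) = (((v - u : ℕ)) : ZMod n) :=
    (Nat.cast_sub huv).symm
  have e1 : ((u : ZMod n) - (v : ZMod n)) = (((n - (v - u) : ℕ)) : ZMod n) := by
    have h1 : v - u ≤ n := by omega
    rw [Nat.cast_sub h1, ZMod.natCast_self, Nat.cast_sub huv]
    ring
  unfold cycleDist
  rw [e1, e2, ZMod.val_natCast, ZMod.val_natCast]
  rcases Nat.lt_or_ge (v - u) n with hlt | hge
  · rcases Nat.eq_zero_or_pos (v - u) with h0 | h0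
    · rw [h0]
      simp [Nat.mod_self]
    · have m1 : (n - (v - u)) % n = n - (v - u) := Nat.mod_eq_of_lt (by omega)
      have m2 : (v - u) % n = v - u := Nat.mod_eq_of_lt hlt
      rw [m1, m2, Nat.min_comm]
  · have hvn : v - u = n := by omega
    rw [hvn]
    simp [Nat.mod_self]

/-- Rabinovich–Raz: any non-contractive embedding of the `n`-cycle (`n > 3`) into a
finite tree metric stretches some edge of the cycle to length at least `n/3 − 1`. -/
theorem rabinovich_raz
    (n : ℕ) (hn : 3 < n)
    (T : Type) [Fintype T] (dT : T → T → ℝ)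
    (hT : IsMetric dT) (hfour : FourPointCond dT)
    (g : ZMod n → T)
    (hg : ∀ i j : ZMod n, cycleDist n i j ≤ dT (g i) (g j)) :
    ∃ x : ZMod n, (n : ℝ) / 3 - 1 ≤ dT (g x) (g (x + 1)) := by
  haveI : NeZero n := ⟨by omega⟩
  obtain ⟨hpos, heqv, hsymm, htri⟩ := hT
  have h00 : ∀ x : T, dT x x = 0 := fun x => (heqv x x).mpr rfl
  obtain ⟨x0, -, hx0⟩ :=
    Finset.exists_max_image (Finset.univ : Finset (ZMod n))
      (fun x => dT (g x) (g (x + 1))) ⟨0, Finset.mem_univ 0⟩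
  refine ⟨x0, ?_⟩
  set K := dT (g x0) (g (x0 + 1)) with hK
  have hKmax : ∀ y : ZMod n, dT (g y) (g (y + 1)) ≤ K :=
    fun y => hx0 y (Finset.mem_univ y)
  have hK0 : 0 ≤ K := hpos _ _
  set q := n / 3 with hq
  have hq3 : 3 * q ≤ n := by omega
  have hqn : n ≤ 3 * q + 2 := by omega
  have hedge : ∀ m : ℕ, dT (g ((m : ℕ) : ZMod n)) (g (((m + 1 : ℕ)) : ZMod n)) ≤ K := by
    intro m
    have hc : (((m + 1 : ℕ)) : ZMod n) = ((m : ℕ) : ZMod n) + 1 := by push_cast; ring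
    rw [hc]; exact hKmax _
  set X := g ((q : ℕ) : ZMod n) with hX
  set Y := g (((q + q : ℕ)) : ZMod n) with hY
  set Z := g ((0 : ℕ) : ZMod n) with hZ
  -- arc 1 : from X to Y, basepoint Z
  obtain ⟨s1', hs1k, hD1⟩ :=
    rrCrossing dT hfour hsymm h00 htri Z (fun j => g (((q + j : ℕ)) : ZMod n)) q K hK0
      (fun j _ => hedge (q + j)) X Y (by simp [hX]) (by simp [hY])
  obtain ⟨s2', hs2k, hD2⟩ :=
    rrCrossing dT hfour hsymm h00 htri X (fun j => g (((q + q + j : ℕ)) : ZMod n))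
      (n - (q + q)) K hK0 (fun j _ => hedge (q + q + j)) Y Z
      (by simp [hY])
      (by
        have h : q + q + (n - (q + q)) = n := by omega
        show g (((q + q + (n - (q + q)) : ℕ)) : ZMod n) = Z
        rw [h, hZ]
        norm_num [ZMod.natCast_self])
  obtain ⟨s3', hs3k, hD3⟩ :=
    rrCrossing dT hfour hsymm h00 htri Y (fun j => g ((j : ℕ) : ZMod n)) q K hK0
      (fun j _ => hedge j) Z X (by simp [hZ]) (by simp [hX])
  set u1 : T := g (((q + s1' : ℕ)) : ZMod n) with hu1
  set u2 : T := g (((q + q + s2' : ℕ)) : ZMod n) with hu2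
  set u3 : T := g ((s3' : ℕ) : ZMod n) with hu3
  have hM1 := rrComp dT hfour hsymm Z X Y u1
  have hM2 := rrComp dT hfour hsymm X Y Z u2
  have hM3 := rrComp dT hfour hsymm Y Z X u3
  have hM1' : max (rrGP dT u1 X Y) (max (rrGP dT u1 Y Z) (rrGP dT u1 Z X)) ≤ K / 2 :=
    max_le (le_trans hM1.1 hD1) (max_le (le_trans hM1.2.1 hD1) (le_trans hM1.2.2 hD1))
  have hM2' : max (rrGP dT u2 X Y) (max (rrGP dT u2 Y Z) (rrGP dT u2 Z X)) ≤ K / 2 :=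
    max_le (le_trans hM2.2.2 hD2) (max_le (le_trans hM2.1 hD2) (le_trans hM2.2.1 hD2))
  have hM3' : max (rrGP dT u3 X Y) (max (rrGP dT u3 Y Z) (rrGP dT u3 Z X)) ≤ K / 2 :=
    max_le (le_trans hM3.2.1 hD3) (max_le (le_trans hM3.2.2 hD3) (le_trans hM3.1 hD3))
  have hpair : ∀ a b : T,
      max (rrGP dT a X Y) (max (rrGP dT a Y Z) (rrGP dT a Z X)) ≤ K / 2 →
      max (rrGP dT b X Y) (max (rrGP dT b Y Z) (rrGP dT b Z X)) ≤ K / 2 →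
      dT a b ≤ K := by
    intro a b ha hb
    have := rrPair dT hfour hsymm X Y Z a b
    linarith
  have hcase : (q ≤ (q + s1') - s3' ∧ q ≤ n - ((q + s1') - s3'))
      ∨ (q ≤ (q + q + s2') - (q + s1') ∧ q ≤ n - ((q + q + s2') - (q + s1')))
      ∨ (q ≤ (q + q + s2') - s3' ∧ q ≤ n - ((q + q + s2') - s3')) := by
    omega
  have hqK : (q : ℝ) ≤ K := by
    rcases hcase with ⟨h1, h2⟩ | ⟨h1, h2⟩ | ⟨h1, h2⟩
    · have hcd := rrCycleCast n s3' (q + s1') (by omega) (by omega) (by omega)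
      have hlb : (q : ℝ) ≤ cycleDist n ((s3' : ℕ) : ZMod n) (((q + s1' : ℕ)) : ZMod n) := by
        rw [hcd]; exact_mod_cast le_min h1 h2
      exact le_trans hlb (le_trans (hg _ _) (hpair u3 u1 hM3' hM1'))
    · have hcd := rrCycleCast n (q + s1') (q + q + s2') (by omega) (by omega) (by omega)
      have hlb : (q : ℝ) ≤ cycleDist n (((q + s1' : ℕ)) : ZMod n) (((q + q + s2' : ℕ)) : ZMod n) := by
        rw [hcd]; exact_mod_cast le_min h1 h2
      exact le_trans hlb (le_trans (hg _ _) (hpair u1 u2 hM1' hM2'))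
    · have hcd := rrCycleCast n s3' (q + q + s2') (by omega) (by omega) (by omega)
      have hlb : (q : ℝ) ≤ cycleDist n ((s3' : ℕ) : ZMod n) (((q + q + s2' : ℕ)) : ZMod n) := by
        rw [hcd]; exact_mod_cast le_min h1 h2
      exact le_trans hlb (le_trans (hg _ _) (hpair u3 u2 hM3' hM2'))
  have hn3 : (n : ℝ) ≤ 3 * (q : ℝ) + 2 := by exact_mod_cast hqn
  linarith
end

section
/- There exists a universal constant C > 0 such that for every n > 3 the following holds. For each a ∈ Z/nZ let f_a : C_n → R be the map obtained by deleting the edge {a, a+1} of the n-cycle and unrolling it to a path: explicitly, f_a(x) is the distance from a+1 to x along the cycle in the positive direction (so f_a is a non-contractive map from the cycle metric to R). Then for every x ∈ Z/nZ, the average over a ∈ Z/nZ (chosen uniformly) of |∇f_a(x)|_∞ = max_{y ≠ x} |f_a(x) − f_a(y)| / d_{C_n}(x,y) is at most C·log n. -/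
/-- Karp's map obtained by deleting the edge `{a, a+1}` of the `n`-cycle and unrolling the
cycle to a path: `x` is sent to the distance from `a+1` to `x` along the cycle in the
positive direction. -/
def karpMap (n : ℕ) (a x : ZMod n) : ℝ := ((x - (a + 1)).val : ℕ)

/- auxiliary lemmas -/

lemma karp_val_sub_of_le {n p q : ℕ} (hq : q ≤ p) (hp : p < n) :
    ((p : ZMod n) - (q : ZMod n)).val = p - q := by
  have h : (p : ZMod n) - (q : ZMod n) = ((p - q : ℕ) : ZMod n) := by
    rw [Nat.cast_sub hq]
  rw [h, ZMod.val_cast_of_lt (by omega)]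

lemma karp_val_sub_of_gt {n p q : ℕ} (hq : q < p) (hp : p < n) :
    ((q : ZMod n) - (p : ZMod n)).val = n - (p - q) := by
  have h : (q : ZMod n) - (p : ZMod n) = ((n - (p - q) : ℕ) : ZMod n) := by
    rw [Nat.cast_sub (by omega), Nat.cast_sub hq.le, ZMod.natCast_self]
    ring
  rw [h, ZMod.val_cast_of_lt (by omega)]

lemma karp_ratio_le (N P Q : ℝ) (hQ : 0 ≤ Q) (hQP : Q + 1 ≤ P) (hPN : P + 1 ≤ N) :
    (P - Q) / min (P - Q) (N - (P - Q)) ≤ N / (P + 1) + N / (N - P) := by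
  have hPQ : (0:ℝ) < P - Q := by linarith
  rcases min_cases (P - Q) (N - (P - Q)) with ⟨h, _⟩ | ⟨h, _⟩
  · rw [h, div_self hPQ.ne']
    have h1 : (1:ℝ) ≤ N / (P + 1) := (one_le_div (by linarith)).2 (by linarith)
    have h2 : (0:ℝ) ≤ N / (N - P) := div_nonneg (by linarith) (by linarith)
    linarith
  · rw [h]
    have h1 : (P - Q) / (N - (P - Q)) ≤ N / (N - P) :=
      div_le_div₀ (by linarith) (by linarith) (by linarith) (by linarith)
    have h2 : (0:ℝ) ≤ N / (P + 1) := div_nonneg (by linarith) (by linarith)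
    linarith

lemma karp_ratio_le' (N P Q : ℝ) (hP : 0 ≤ P) (hPQ : P + 1 ≤ Q) (hQN : Q + 1 ≤ N) :
    (Q - P) / min (Q - P) (N - (Q - P)) ≤ N / (P + 1) + N / (N - P) := by
  have hQP : (0:ℝ) < Q - P := by linarith
  rcases min_cases (Q - P) (N - (Q - P)) with ⟨h, _⟩ | ⟨h, _⟩
  · rw [h, div_self hQP.ne']
    have h1 : (1:ℝ) ≤ N / (P + 1) := (one_le_div (by linarith)).2 (by linarith)
    have h2 : (0:ℝ) ≤ N / (N - P) := div_nonneg (by linarith) (by linarith)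
    linarith
  · rw [h]
    have h1 : (Q - P) / (N - (Q - P)) ≤ N / (P + 1) :=
      div_le_div₀ (by linarith) (by linarith) (by linarith) (by linarith)
    have h2 : (0:ℝ) ≤ N / (N - P) := div_nonneg (by linarith) (by linarith)
    linarith

lemma karp_grad_le (n : ℕ) [NeZero n] (hn : 3 < n) (a x y : ZMod n) (hy : y ≠ x) :
    |karpMap n a x - karpMap n a y| / cycleDist n x y ≤
      (n : ℝ) / (((x - (a + 1)).val : ℝ) + 1) + (n : ℝ) / ((n : ℝ) - ((x - (a + 1)).val : ℝ)) := by
  set p := (x - (a + 1)).val with hpdef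
  set q := (y - (a + 1)).val with hqdef
  have hp : p < n := ZMod.val_lt _
  have hq : q < n := ZMod.val_lt _
  have hxp : ((p : ℕ) : ZMod n) = x - (a + 1) := ZMod.natCast_rightInverse _
  have hyq : ((q : ℕ) : ZMod n) = y - (a + 1) := ZMod.natCast_rightInverse _
  have hxy : x - y = (p : ZMod n) - (q : ZMod n) := by rw [hxp, hyq]; ring
  have hyx : y - x = (q : ZMod n) - (p : ZMod n) := by rw [hxp, hyq]; ring
  have hpq : p ≠ q := by
    intro h
    apply hy
    have : ((q : ℕ) : ZMod n) = ((p : ℕ) : ZMod n) := by rw [h]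
    rw [hxp, hyq] at this
    have := sub_left_injective this
    exact this
  have hkarp : karpMap n a x - karpMap n a y = (p : ℝ) - (q : ℝ) := by
    simp [karpMap, hpdef, hqdef]
  rcases hpq.lt_or_gt with hlt | hlt
  · -- p < q
    have e1 : (x - y).val = n - (q - p) := by rw [hxy]; exact karp_val_sub_of_gt hlt hq
    have e2 : (y - x).val = q - p := by rw [hyx]; exact karp_val_sub_of_le hlt.le hq
    have habs : |karpMap n a x - karpMap n a y| = (q : ℝ) - (p : ℝ) := by
      rw [hkarp, abs_sub_comm, abs_of_nonneg (by simp [sub_nonneg]; exact_mod_cast hlt.le)]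
    rw [habs]
    unfold cycleDist
    rw [e1, e2, Nat.cast_min]
    have c1 : ((n - (q - p) : ℕ) : ℝ) = (n : ℝ) - ((q : ℝ) - (p : ℝ)) := by
      rw [Nat.cast_sub (by omega), Nat.cast_sub hlt.le]
    have c2 : ((q - p : ℕ) : ℝ) = (q : ℝ) - (p : ℝ) := by rw [Nat.cast_sub hlt.le]
    rw [c1, c2, min_comm]
    exact karp_ratio_le' (n : ℝ) (p : ℝ) (q : ℝ) (by positivity)
      (by exact_mod_cast Nat.succ_le_of_lt hlt) (by exact_mod_cast Nat.succ_le_of_lt hq)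
  · -- q < p
    have e1 : (x - y).val = p - q := by rw [hxy]; exact karp_val_sub_of_le hlt.le hp
    have e2 : (y - x).val = n - (p - q) := by rw [hyx]; exact karp_val_sub_of_gt hlt hp
    have habs : |karpMap n a x - karpMap n a y| = (p : ℝ) - (q : ℝ) := by
      rw [hkarp, abs_of_nonneg (by simp [sub_nonneg]; exact_mod_cast hlt.le)]
    rw [habs]
    unfold cycleDist
    rw [e1, e2, Nat.cast_min]
    have c1 : ((p - q : ℕ) : ℝ) = (p : ℝ) - (q : ℝ) := by rw [Nat.cast_sub hlt.le]
    have c2 : ((n - (p - q) : ℕ) : ℝ) = (n : ℝ) - ((p : ℝ) - (q : ℝ)) := by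
      rw [Nat.cast_sub (by omega), Nat.cast_sub hlt.le]
    rw [c1, c2]
    exact karp_ratio_le (n : ℝ) (p : ℝ) (q : ℝ) (by positivity)
      (by exact_mod_cast Nat.succ_le_of_lt hlt) (by exact_mod_cast Nat.succ_le_of_lt hp)

/-- There is a universal `C > 0` such that for every `n > 3` and every point `x` of the
`n`-cycle, the average over a uniformly random deleted edge `{a,a+1}` of the maximum
gradient of Karp's path embedding at `x` is at most `C log n`. -/
theorem karp_embedding_max_gradient :
    ∃ C : ℝ, 0 < C ∧
      ∀ (n : ℕ) [NeZero n], 3 < n →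
        ∀ x : ZMod n,
          (1 / (n : ℝ)) * ∑ a : ZMod n,
              (⨆ y : {y : ZMod n // y ≠ x},
                |karpMap n a x - karpMap n a y.1| / cycleDist n x y.1) ≤
            C * Real.log n := by
  refine ⟨4, by norm_num, ?_⟩
  intro n _ hn x
  haveI : Fact (1 < n) := ⟨by omega⟩
  have hn0 : (0:ℝ) < n := by positivity
  set B : ℕ → ℝ := fun p => (n : ℝ) / ((p : ℝ) + 1) + (n : ℝ) / ((n : ℝ) - (p : ℝ)) with hB
  haveI hne : Nonempty {y : ZMod n // y ≠ x} := by
    refine ⟨⟨x + 1, ?_⟩⟩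
    intro h
    have h1 : (1 : ZMod n) = 0 := by
      have := h
      nth_rewrite 2 [← add_zero x] at this
      exact add_left_cancel this
    exact one_ne_zero h1
  have hsup : ∀ a : ZMod n,
      (⨆ y : {y : ZMod n // y ≠ x},
        |karpMap n a x - karpMap n a y.1| / cycleDist n x y.1) ≤ B ((x - (a + 1)).val) := by
    intro a
    exact ciSup_le fun y => karp_grad_le n hn a x y.1 y.2
  have hsum1 : ∑ a : ZMod n,
      (⨆ y : {y : ZMod n // y ≠ x},
        |karpMap n a x - karpMap n a y.1| / cycleDist n x y.1) ≤
      ∑ a : ZMod n, B ((x - (a + 1)).val) :=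
    Finset.sum_le_sum fun a _ => hsup a
  have hsum2 : ∑ a : ZMod n, B ((x - (a + 1)).val) = ∑ b : ZMod n, B b.val := by
    have := (Equiv.subLeft (x - 1)).sum_comp (fun b => B b.val)
    rw [← this]
    apply Finset.sum_congr rfl
    intro a _
    congr 1
    rw [Equiv.subLeft_apply]
    ring
  have hsum3 : ∑ b : ZMod n, B b.val = ∑ k ∈ Finset.range n, B k := by
    rw [Finset.sum_range fun k => B k]
    refine Fintype.sum_bijective (fun b : ZMod n => (⟨b.val, ZMod.val_lt b⟩ : Fin n)) ?_ _ _
      (fun b => rfl)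
    rw [Fintype.bijective_iff_injective_and_card]
    refine ⟨fun b c h => ZMod.val_injective n (congrArg Fin.val h), by simp [ZMod.card]⟩
  have hsum4 : ∑ k ∈ Finset.range n, B k = 2 * (n : ℝ) * (harmonic n : ℝ) := by
    have hh : (harmonic n : ℝ) = ∑ k ∈ Finset.range n, ((k : ℝ) + 1)⁻¹ := by
      rw [harmonic]
      push_cast
      rfl
    have hrefl : ∑ k ∈ Finset.range n, (n : ℝ) / ((n : ℝ) - (k : ℝ)) =
        ∑ k ∈ Finset.range n, (n : ℝ) / ((k : ℝ) + 1) := by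
      rw [← Finset.sum_range_reflect (fun k => (n : ℝ) / ((k : ℝ) + 1)) n]
      apply Finset.sum_congr rfl
      intro j hj
      have hjn : j < n := Finset.mem_range.1 hj
      have : ((n - 1 - j : ℕ) : ℝ) = (n : ℝ) - 1 - (j : ℝ) := by
        rw [Nat.cast_sub (by omega), Nat.cast_sub (by omega)]
        norm_num
      rw [this]
      ring_nf
    rw [hB]
    rw [Finset.sum_add_distrib, hrefl, hh, Finset.mul_sum]
    rw [← Finset.sum_add_distrib]
    apply Finset.sum_congr rfl
    intro k _
    rw [div_eq_mul_inv]
    ring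
  have hharm : (harmonic n : ℝ) ≤ 1 + Real.log n := harmonic_le_one_add_log n
  have hlog : (1 : ℝ) ≤ Real.log n := by
    rw [Real.le_log_iff_exp_le hn0]
    calc Real.exp 1 ≤ 2.7182818286 := Real.exp_one_lt_d9.le
    _ ≤ (n : ℝ) := by
        have : (4 : ℝ) ≤ n := by exact_mod_cast hn
        linarith
  calc (1 / (n : ℝ)) * ∑ a : ZMod n,
          (⨆ y : {y : ZMod n // y ≠ x},
            |karpMap n a x - karpMap n a y.1| / cycleDist n x y.1)
      ≤ (1 / (n : ℝ)) * (2 * (n : ℝ) * (harmonic n : ℝ)) := by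
        apply mul_le_mul_of_nonneg_left _ (by positivity)
        rw [← hsum4, ← hsum3, ← hsum2]
        exact hsum1
    _ = 2 * (harmonic n : ℝ) := by field_simp
    _ ≤ 2 * (1 + Real.log n) := by linarith
    _ ≤ 4 * Real.log n := by linarith
end

section
/- There exists a universal constant c > 0 such that for every n > 3: if (T, d_T) is a finite metric space satisfying the four-point condition and g : C_n → T is non-contractive with respect to the cycle metric, then Σ_{y ∈ Z/nZ} |∇g(y)|_∞ ≥ c·n·log n, where |∇g(y)|_∞ = max_{z ≠ y} d_T(g(y),g(z))/d_{C_n}(y,z). -/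
def natCycleDist (n : ℕ) (i j : ZMod n) : ℕ := min (i - j).val (j - i).val

lemma cycleDist_eq_nat (n : ℕ) (i j : ZMod n) : cycleDist n i j = (natCycleDist n i j : ℝ) := rfl

lemma cycleDist_nonneg (n : ℕ) (i j : ZMod n) : 0 ≤ cycleDist n i j := by
  rw [cycleDist_eq_nat]; positivity

lemma cycleDist_comm (n : ℕ) (i j : ZMod n) : cycleDist n i j = cycleDist n j i := by
  unfold cycleDist
  rw [Nat.min_comm]

lemma cycleDist_self (n : ℕ) (i : ZMod n) : cycleDist n i i = 0 := by
  unfold cycleDist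
  simp

lemma one_le_cycleDist (n : ℕ) [NeZero n] {i j : ZMod n} (h : i ≠ j) :
    (1 : ℝ) ≤ cycleDist n i j := by
  rw [cycleDist_eq_nat]
  have h1 : i - j ≠ 0 := sub_ne_zero.mpr h
  have h2 : j - i ≠ 0 := sub_ne_zero.mpr (Ne.symm h)
  have v1 : 1 ≤ (i - j).val := Nat.one_le_iff_ne_zero.mpr (fun hv => h1 ((ZMod.val_eq_zero _).mp hv))
  have v2 : 1 ≤ (j - i).val := Nat.one_le_iff_ne_zero.mpr (fun hv => h2 ((ZMod.val_eq_zero _).mp hv))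
  have : 1 ≤ natCycleDist n i j := le_min v1 v2
  exact_mod_cast this

lemma cycleDist_pos (n : ℕ) [NeZero n] {i j : ZMod n} (h : i ≠ j) :
    0 < cycleDist n i j := lt_of_lt_of_le one_pos (one_le_cycleDist n h)

lemma natCycleDist_triangle (n : ℕ) [NeZero n] (a b c : ZMod n) :
    natCycleDist n a c ≤ natCycleDist n a b + natCycleDist n b c := by
  set u := (a - b).val with hu
  set u' := (b - a).val with hu'
  set v := (b - c).val with hv
  set v' := (c - b).val with hv'
  have h1 : (a - c).val ≤ u + v := by
    have : a - c = (a - b) + (b - c) := by ring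
    rw [this, ZMod.val_add]
    exact Nat.mod_le _ _
  have h2 : (c - a).val ≤ v' + u' := by
    have : c - a = (c - b) + (b - a) := by ring
    rw [this, ZMod.val_add]
    exact Nat.mod_le _ _
  have h3 : min (a - c).val (c - a).val ≤ u + v' := by
    rcases le_total v' u with h | h
    · refine (min_le_left _ _).trans ?_
      have : a - c = (a - b) - (c - b) := by ring
      rw [this, ZMod.val_sub h]
      omega
    · refine (min_le_right _ _).trans ?_
      have : c - a = (c - b) - (a - b) := by ring
      rw [this, ZMod.val_sub h]
      omega
  have h4 : min (a - c).val (c - a).val ≤ u' + v := by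
    rcases le_total v u' with h | h
    · refine (min_le_right _ _).trans ?_
      have : c - a = (b - a) - (b - c) := by ring
      rw [this, ZMod.val_sub h]
      omega
    · refine (min_le_left _ _).trans ?_
      have : a - c = (b - c) - (b - a) := by ring
      rw [this, ZMod.val_sub h]
      omega
  unfold natCycleDist
  rcases min_cases u u' with ⟨he, _⟩ | ⟨he, _⟩ <;> rcases min_cases v v' with ⟨he2, _⟩ | ⟨he2, _⟩ <;>
    rw [he, he2] <;> [skip; skip; skip; skip] <;>
    first
      | exact (min_le_left _ _).trans h1
      | exact h3
      | exact h4
      | exact (min_le_right _ _).trans (h2.trans (by omega))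

lemma cycleDist_natCast (n : ℕ) [NeZero n] {i j : ℕ} (hij : i ≤ j) (hjn : j ≤ n) :
    cycleDist n i j = ((min (j - i) (n - (j - i)) : ℕ) : ℝ) := by
  set k := j - i with hk
  have hkn : k ≤ n := by omega
  have hji : (j : ZMod n) - (i : ZMod n) = (k : ZMod n) := by
    have hj : (j : ℕ) = i + k := by omega
    rw [hj]
    push_cast
    ring
  have hij' : (i : ZMod n) - (j : ZMod n) = -(k : ZMod n) := by
    rw [← neg_sub, hji]
  unfold cycleDist
  rw [hji, hij']
  rcases eq_or_lt_of_le hkn with he | hlt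
  · -- k = n
    have : (k : ZMod n) = 0 := by rw [he]; exact ZMod.natCast_self n
    rw [this]
    simp [he]
  · have hv : ((k : ZMod n)).val = k := ZMod.val_natCast_of_lt hlt
    rcases Nat.eq_zero_or_pos k with h0 | h0
    · have : (k : ZMod n) = 0 := by rw [h0]; simp
      rw [this]
      simp [h0]
    · have hne : (k : ZMod n) ≠ 0 := by
        intro hc
        rw [hc] at hv
        simp [ZMod.val_zero] at hv
        omega
      rw [ZMod.neg_val, if_neg hne, hv, Nat.min_comm]

lemma cycleDist_triangle (n : ℕ) [NeZero n] (a b c : ZMod n) :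
    cycleDist n a c ≤ cycleDist n a b + cycleDist n b c := by
  rw [cycleDist_eq_nat, cycleDist_eq_nat, cycleDist_eq_nat]
  exact_mod_cast natCycleDist_triangle n a b c


noncomputable def alph (ρ : ℕ → ℕ → ℝ) (m k : ℕ) : ℝ := (ρ 0 k + ρ 0 m - ρ k m) / 2
noncomputable def bet (ρ : ℕ → ℕ → ℝ) (m k : ℕ) : ℝ := (ρ 0 k + ρ k m - ρ 0 m) / 2

def GoodP (ρ : ℕ → ℕ → ℝ) (m : ℕ) (L s : ℝ) (k : ℕ) : Prop :=
  s - L < alph ρ m k ∧ alph ρ m k < s ∧ bet ρ m k < L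

lemma rr_core {n : ℕ} (hn : 4 ≤ n) (ρ : ℕ → ℕ → ℝ)
    (hself : ∀ i, ρ i i = 0)
    (hsym : ∀ i j, ρ i j = ρ j i)
    (htri : ∀ i j k, ρ i k ≤ ρ i j + ρ j k)
    (h4 : ∀ a b c d, ρ a b + ρ c d ≤ max (ρ a c + ρ b d) (ρ a d + ρ b c))
    (hnc : ∀ i j : ℕ, i ≤ j → j ≤ n → ((min (j - i) (n - (j - i)) : ℕ) : ℝ) ≤ ρ i j)
    (hpn : ρ 0 n = 0)
    (hedge : ∀ k, k < n → ρ k (k + 1) < (n : ℝ) / 24) : False := by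
  classical
  set L : ℝ := (n : ℝ) / 24 with hL_def
  have hL : 0 < L := by positivity
  set m : ℕ := n / 2 with hm_def
  have hm2 : 2 ≤ m := by omega
  have hmn : 2 * m ≤ n := by omega
  have hnm : n ≤ 2 * m + 1 := by omega
  have hmltn : m < n := by omega
  have hnneg : ∀ i j, 0 ≤ ρ i j := by
    intro i j
    have h1 := htri i j i
    rw [hself, hsym j i] at h1
    linarith
  -- basic α, β facts
  have hab : ∀ k, ρ 0 k = alph ρ m k + bet ρ m k := by
    intro k; unfold alph bet; ring
  have hab2 : ∀ k, ρ k m = ρ 0 m - alph ρ m k + bet ρ m k := by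
    intro k; unfold alph bet; ring
  have hbet : ∀ k, 0 ≤ bet ρ m k := by
    intro k
    have := htri 0 k m
    unfold bet
    linarith
  have halph0 : alph ρ m 0 = 0 := by
    unfold alph; rw [hself]; ring
  have halphm : alph ρ m m = ρ 0 m := by
    unfold alph; rw [hself]; ring
  have hrnm : ρ n m = ρ 0 m := by
    have h1 := htri n 0 m
    have h2 := htri 0 n m
    rw [hsym n 0] at h1
    rw [hpn] at h1 h2
    linarith
  have halphn : alph ρ m n = 0 := by
    unfold alph; rw [hpn, hrnm]; ring
  have hM : (m : ℝ) ≤ ρ 0 m := by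
    have := hnc 0 m (by omega) (by omega)
    have hmin : min (m - 0) (n - (m - 0)) = m := by omega
    rw [hmin] at this
    exact this
  -- F1 : boundary-edge lemma
  have hF1 : ∀ a b : ℕ, alph ρ m a < alph ρ m b →
      bet ρ m a + bet ρ m b + (alph ρ m b - alph ρ m a) ≤ ρ a b := by
    intro a b hab'
    have h := h4 0 b a m
    rcases le_max_iff.mp h with h1 | h1
    · exfalso
      unfold alph at hab'
      linarith
    · unfold alph bet at *
      rw [hsym b a] at h1
      linarith
  -- chord lemma
  have hchord : ∀ a b : ℕ, ρ a b ≤ |alph ρ m a - alph ρ m b| + bet ρ m a + bet ρ m b := by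
    intro a b
    have h := h4 a b 0 m
    rcases le_max_iff.mp h with h1 | h1
    · have : ρ a b ≤ (alph ρ m a - alph ρ m b) + bet ρ m a + bet ρ m b := by
        unfold alph bet
        rw [hsym a 0] at h1
        linarith
      have habs : alph ρ m a - alph ρ m b ≤ |alph ρ m a - alph ρ m b| := le_abs_self _
      linarith
    · have : ρ a b ≤ (alph ρ m b - alph ρ m a) + bet ρ m a + bet ρ m b := by
        unfold alph bet
        rw [hsym b 0] at h1
        linarith
      have habs : alph ρ m b - alph ρ m a ≤ |alph ρ m a - alph ρ m b| := by
        rw [abs_sub_comm]; exact le_abs_self _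
      linarith
  -- existence of good boundary vertices at every level
  have exv : ∀ s : ℝ, 0 < s → s ≤ ρ 0 m → ∃ a b : ℕ, a < m ∧ m < b ∧ b ≤ n ∧
      GoodP ρ m L s a ∧ GoodP ρ m L s b := by
    intro s hs hsM
    -- right boundary vertex
    set F := (Finset.range (m+1)).filter (fun k => alph ρ m k < s) with hF_def
    have h0F : (0 : ℕ) ∈ F := by
      rw [hF_def]
      refine Finset.mem_filter.mpr ⟨Finset.mem_range.mpr (by omega), by rw [halph0]; exact hs⟩
    have hFne : F.Nonempty := ⟨0, h0F⟩
    set a := F.max' hFne with ha_def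
    have haF : a ∈ F := F.max'_mem hFne
    have haR : a ≤ m ∧ alph ρ m a < s := by
      have h := Finset.mem_filter.mp haF
      exact ⟨by have := Finset.mem_range.mp h.1; omega, h.2⟩
    have ham : a < m := by
      rcases lt_or_eq_of_le haR.1 with h | h
      · exact h
      · exfalso; have := haR.2; rw [h, halphm] at this; linarith
    have ha1 : s ≤ alph ρ m (a+1) := by
      by_contra hcon
      push_neg at hcon
      have hmem : a + 1 ∈ F := by
        rw [hF_def]
        exact Finset.mem_filter.mpr ⟨Finset.mem_range.mpr (by omega), hcon⟩
      have := F.le_max' _ hmem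
      omega
    have hea : ρ a (a+1) < L := hedge a (by omega)
    have hf1 := hF1 a (a+1) (lt_of_lt_of_le haR.2 ha1)
    have hga : GoodP ρ m L s a := by
      refine ⟨?_, haR.2, ?_⟩
      · have h1 := hbet a; have h2 := hbet (a+1); linarith
      · have h1 := hbet a; have h2 := hbet (a+1); linarith
    -- left boundary vertex
    set G := (Finset.Icc (m+1) n).filter (fun k => alph ρ m k < s) with hG_def
    have hnG : n ∈ G := by
      rw [hG_def]
      refine Finset.mem_filter.mpr ⟨Finset.mem_Icc.mpr ⟨by omega, le_rfl⟩, by rw [halphn]; exact hs⟩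
    have hGne : G.Nonempty := ⟨n, hnG⟩
    set b := G.min' hGne with hb_def
    have hbG : b ∈ G := G.min'_mem hGne
    have hbR : (m + 1 ≤ b ∧ b ≤ n) ∧ alph ρ m b < s := by
      have h := Finset.mem_filter.mp hbG
      exact ⟨Finset.mem_Icc.mp h.1, h.2⟩
    have hb1 : s ≤ alph ρ m (b-1) := by
      rcases Nat.lt_or_ge (b-1) (m+1) with h | h
      · have hbm : b - 1 = m := by omega
        rw [hbm, halphm]; exact hsM
      · by_contra hcon
        push_neg at hcon
        have hmem : b - 1 ∈ G := by
          rw [hG_def]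
          exact Finset.mem_filter.mpr ⟨Finset.mem_Icc.mpr ⟨h, by omega⟩, hcon⟩
        have := G.min'_le _ hmem
        omega
    have hbb : b - 1 + 1 = b := by omega
    have heb : ρ (b-1) b < L := by
      have := hedge (b-1) (by omega)
      rwa [hbb] at this
    have hf2 := hF1 b (b-1) (lt_of_lt_of_le hbR.2 hb1)
    rw [hsym b (b-1)] at hf2
    have hgb : GoodP ρ m L s b := by
      refine ⟨?_, hbR.2, ?_⟩
      · have h1 := hbet b; have h2 := hbet (b-1); linarith
      · have h1 := hbet b; have h2 := hbet (b-1); linarith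
    exact ⟨a, b, ham, by omega, hbR.1.2, hga, hgb⟩
  -- position lemmas
  have P1 : ∀ (s : ℝ) (a : ℕ), GoodP ρ m L s a → a < m → (a : ℝ) < s + L := by
    intro s a hg ha
    have h1 := hnc 0 a (by omega) (by omega)
    have hmin : min (a - 0) (n - (a - 0)) = a := by omega
    rw [hmin] at h1
    have h2 := hab a
    obtain ⟨_, hg2, hg3⟩ := hg
    have hb := hbet a
    linarith
  have P2 : ∀ (s : ℝ) (b : ℕ), GoodP ρ m L s b → m < b → b ≤ n → (n : ℝ) - b < s + L := by
    intro s b hg hb hbn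
    have h1 := hnc 0 b (by omega) hbn
    have hmin : min (b - 0) (n - (b - 0)) = n - b := by omega
    rw [hmin] at h1
    have hcast : ((n - b : ℕ) : ℝ) = (n : ℝ) - b := by
      push_cast [Nat.cast_sub hbn]; ring
    rw [hcast] at h1
    have h2 := hab b
    obtain ⟨_, hg2, hg3⟩ := hg
    linarith
  have P3 : ∀ (s : ℝ) (a : ℕ), GoodP ρ m L s a → a < m → (m : ℝ) - a < (ρ 0 m - s) + 2 * L := by
    intro s a hg ha
    have h1 := hnc a m (by omega) (by omega)
    have hmin : min (m - a) (n - (m - a)) = m - a := by omega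
    rw [hmin] at h1
    have hcast : ((m - a : ℕ) : ℝ) = (m : ℝ) - a := by
      push_cast [Nat.cast_sub (le_of_lt ha)]; ring
    rw [hcast] at h1
    have h2 := hab2 a
    obtain ⟨hg1, _, hg3⟩ := hg
    linarith
  have P4 : ∀ (s : ℝ) (b : ℕ), GoodP ρ m L s b → m < b → b ≤ n →
      (b : ℝ) - m < (ρ 0 m - s) + 2 * L + 1 := by
    intro s b hg hb hbn
    have hrbm : ρ b m < (ρ 0 m - s) + 2 * L := by
      have h2 := hab2 b
      obtain ⟨hg1, _, hg3⟩ := hg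
      linarith
    rcases eq_or_lt_of_le hbn with he | hlt
    · -- b = n
      subst he
      have hnm' : (b : ℝ) ≤ 2 * m + 1 := by exact_mod_cast hnm
      rw [hrnm] at hrbm
      have := hM
      linarith
    · have h1 := hnc m b (by omega) (by omega)
      have hmin : min (b - m) (n - (b - m)) = b - m := by omega
      rw [hmin] at h1
      have hcast : ((b - m : ℕ) : ℝ) = (b : ℝ) - m := by
        push_cast [Nat.cast_sub (le_of_lt hb)]; ring
      rw [hcast] at h1
      rw [hsym b m] at hrbm
      linarith
  -- cycle-distance lemmas for positions
  have hdR : ∀ a a' : ℕ, a < m → a' < m → |(a : ℝ) - a'| ≤ ρ a a' := by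
    have key' : ∀ a a' : ℕ, a ≤ a' → a' < m → |(a : ℝ) - a'| ≤ ρ a a' := by
      intro a a' h ha'
      have h1 := hnc a a' h (by omega)
      have hmin : min (a' - a) (n - (a' - a)) = a' - a := by omega
      rw [hmin] at h1
      have hcast : ((a' - a : ℕ) : ℝ) = (a' : ℝ) - a := by
        push_cast [Nat.cast_sub h]; ring
      rw [hcast] at h1
      rw [abs_sub_comm, abs_of_nonneg (sub_nonneg.mpr (by exact_mod_cast h))]
      exact h1
    intro a a' ha ha'
    rcases le_total a a' with h | h
    · exact key' a a' h ha'
    · rw [abs_sub_comm, hsym a a']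
      exact key' a' a h ha
  have hdL : ∀ b b' : ℕ, m < b → b ≤ n → m < b' → b' ≤ n → |(b : ℝ) - b'| ≤ ρ b b' := by
    have key' : ∀ b b' : ℕ, m < b → b ≤ b' → b' ≤ n → |(b : ℝ) - b'| ≤ ρ b b' := by
      intro b b' hb h hb'
      have h1 := hnc b b' h hb'
      have hmin : min (b' - b) (n - (b' - b)) = b' - b := by omega
      rw [hmin] at h1
      have hcast : ((b' - b : ℕ) : ℝ) = (b' : ℝ) - b := by
        push_cast [Nat.cast_sub h]; ring
      rw [hcast] at h1
      rw [abs_sub_comm, abs_of_nonneg (sub_nonneg.mpr (by exact_mod_cast h))]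
      exact h1
    intro b b' hb hbn hb' hbn'
    rcases le_total b b' with h | h
    · exact key' b b' hb h hbn'
    · rw [abs_sub_comm, hsym b b']
      exact key' b' b hb' h hbn
  have hdAB : ∀ a b : ℕ, a < m → m < b → b ≤ n → (b : ℝ) - a ≤ (n : ℝ) / 2 →
      (b : ℝ) - a ≤ ρ a b := by
    intro a b ha hb hbn hhalf
    have hab' : a ≤ b := by omega
    have hcast : ((b - a : ℕ) : ℝ) = (b : ℝ) - a := by
      push_cast [Nat.cast_sub hab']; ring
    have h2 : 2 * (b - a) ≤ n := by
      have : ((b - a : ℕ) : ℝ) ≤ (n : ℝ) / 2 := by rw [hcast]; exact hhalf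
      have : 2 * ((b - a : ℕ) : ℝ) ≤ (n : ℝ) := by linarith
      exact_mod_cast this
    have h1 := hnc a b hab' hbn
    have hmin : min (b - a) (n - (b - a)) = b - a := by omega
    rw [hmin, hcast] at h1
    exact h1
  -- the sweep
  set T : ℕ := ⌊ρ 0 m / L⌋₊ with hT_def
  have hT1 : (T : ℝ) * L ≤ ρ 0 m := by
    rw [← le_div_iff₀ hL]
    exact Nat.floor_le (div_nonneg (hnneg 0 m) hL.le)
  have hT2 : ρ 0 m < ((T : ℝ) + 1) * L := by
    rw [← div_lt_iff₀ hL]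
    push_cast
    exact Nat.lt_floor_add_one _
  have hT0 : 1 ≤ T := by
    apply Nat.le_floor
    rw [Nat.cast_one, le_div_iff₀ hL, one_mul, hL_def]
    have : (n : ℝ) ≤ 2 * m + 1 := by exact_mod_cast hnm
    have hn4 : (4 : ℝ) ≤ n := by exact_mod_cast hn
    linarith [hM]
  -- C t
  have key : ∀ t : ℕ, 1 ≤ t → t ≤ T → ∃ a b : ℕ, a < m ∧ m < b ∧ b ≤ n ∧
      GoodP ρ m L ((t : ℝ) * L) a ∧ GoodP ρ m L ((t : ℝ) * L) b ∧
      (n : ℝ) / 2 < (b : ℝ) - a := by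
    intro t
    induction t with
    | zero => omega
    | succ t ih =>
      intro h1 hT
      have hsP : (0 : ℝ) < ((t + 1 : ℕ) : ℝ) * L := by positivity
      have hsM : ((t + 1 : ℕ) : ℝ) * L ≤ ρ 0 m := by
        have : ((t + 1 : ℕ) : ℝ) ≤ (T : ℝ) := by exact_mod_cast hT
        nlinarith [hL.le]
      obtain ⟨a', b', ham', hmb', hbn', hga', hgb'⟩ := exv (((t + 1 : ℕ) : ℝ) * L) hsP hsM
      refine ⟨a', b', ham', hmb', hbn', hga', hgb', ?_⟩
      have hn0 : (0 : ℝ) < n := by positivity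
      rcases Nat.eq_zero_or_pos t with rfl | ht
      · -- base case : s = L
        have hp1 := P1 _ _ hga' ham'
        have hp2 := P2 _ _ hgb' hmb' hbn'
        have hc : ((0 + 1 : ℕ) : ℝ) = 1 := by norm_num
        rw [hc] at hp1 hp2
        linarith
      · -- inductive step
        obtain ⟨a, b, ham, hmb, hbn, hga, hgb, hab'⟩ := ih ht (by omega)
        -- chord between a and a'
        obtain ⟨hga1, hga2, hga3⟩ := hga
        obtain ⟨hga1', hga2', hga3'⟩ := hga'
        obtain ⟨hgb1, hgb2, hgb3⟩ := hgb
        obtain ⟨hgb1', hgb2', hgb3'⟩ := hgb'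
        have hstep : ((t + 1 : ℕ) : ℝ) * L = (t : ℝ) * L + L := by push_cast; ring
        rw [hstep] at hga1' hga2' hgb1' hgb2'
        have hcha : ρ a a' ≤ |alph ρ m a - alph ρ m a'| + bet ρ m a + bet ρ m a' := hchord a a'
        have habsa : |alph ρ m a - alph ρ m a'| < 2 * L :=
          abs_lt.mpr ⟨by linarith, by linarith⟩
        have hchb : ρ b b' ≤ |alph ρ m b - alph ρ m b'| + bet ρ m b + bet ρ m b' := hchord b b'
        have habsb : |alph ρ m b - alph ρ m b'| < 2 * L :=
          abs_lt.mpr ⟨by linarith, by linarith⟩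
        have hda := (hdR a a' ham ham').trans_lt (by linarith : ρ a a' < 4 * L)
        have hdb := (hdL b b' hmb hbn hmb' hbn').trans_lt (by linarith : ρ b b' < 4 * L)
        have hda' := abs_lt.mp hda
        have hdb' := abs_lt.mp hdb
        by_contra hcon
        push_neg at hcon
        have hchab : ρ a' b' ≤ |alph ρ m a' - alph ρ m b'| + bet ρ m a' + bet ρ m b' :=
          hchord a' b'
        have habsab : |alph ρ m a' - alph ρ m b'| < L :=
          abs_lt.mpr ⟨by linarith, by linarith⟩
        have hle := hdAB a' b' ham' hmb' hbn' hcon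
        linarith
  -- final contradiction at t = T
  obtain ⟨a, b, ham, hmb, hbn, hga, hgb, hab'⟩ := key T hT0 le_rfl
  have h3 := P3 _ _ hga ham
  have h4' := P4 _ _ hgb hmb hbn
  have hsT : ρ 0 m - (T : ℝ) * L < L := by linarith
  have hn4 : (4 : ℝ) ≤ n := by exact_mod_cast hn
  have : (b : ℝ) - a < 6 * L + 1 := by linarith
  rw [hL_def] at this
  linarith



open Finset

lemma cycleDist_succ (n : ℕ) [NeZero n] (hn : 2 ≤ n) (a : ZMod n) :
    cycleDist n a (a + 1) = 1 := by
  have hf : Fact (1 < n) := ⟨hn⟩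
  unfold cycleDist
  have h1 : a + 1 - a = 1 := by ring
  have h2 : a - (a + 1) = -1 := by ring
  rw [h1, h2]
  have hv1 : (1 : ZMod n).val = 1 := ZMod.val_one n
  have hne : (1 : ZMod n) ≠ 0 := one_ne_zero
  rw [ZMod.neg_val, if_neg hne, hv1]
  have : min (n - 1) 1 = 1 := by omega
  rw [this]
  norm_num


/-- There is a universal `c > 0` such that for every `n > 3`, every non-contractive
embedding of the `n`-cycle into a finite tree metric satisfies the Poincaré-type
inequality `∑_y |∇g(y)|_∞ ≥ c n log n`. -/
theorem cycle_tree_gradient_sum_lower_bound :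
    ∃ c : ℝ, 0 < c ∧
      ∀ (n : ℕ) [NeZero n], 3 < n →
        ∀ (T : Type), Finite T →
          ∀ (dT : T → T → ℝ), IsMetric dT → FourPointCond dT →
            ∀ g : ZMod n → T,
              (∀ a b : ZMod n, cycleDist n a b ≤ dT (g a) (g b)) →
              c * n * Real.log n ≤
                ∑ y : ZMod n,
                  (⨆ z : {z : ZMod n // z ≠ y},
                    dT (g y) (g z.1) / cycleDist n y z.1) := by
  classical
  refine ⟨1/48, by norm_num, ?_⟩
  intro n _ hn3 T _ dT hmet h4pc g hg
  have hn : 4 ≤ n := hn3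
  have hn0 : (0:ℝ) < n := by positivity
  have hself : ∀ t : T, dT t t = 0 := fun t => (hmet.2.1 t t).mpr rfl
  have hsymT := hmet.2.2.1
  have htriT := hmet.2.2.2
  have hnnegT := hmet.1
  -- apply the RR core lemma to get a stretched edge
  have hrr : ∃ k : ℕ, k < n ∧ (n : ℝ) / 24 ≤ dT (g k) (g (k + 1)) := by
    by_contra hcon
    push_neg at hcon
    refine rr_core hn (fun i j => dT (g i) (g j)) (fun i => hself _)
      (fun i j => hsymT _ _) (fun i j k => htriT _ _ _)
      (fun a b c d => h4pc (g a) (g b) (g c) (g d)) ?_ ?_ ?_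
    · intro i j hij hjn
      rw [← cycleDist_natCast n hij hjn]
      exact hg _ _
    · show dT (g ((0:ℕ):ZMod n)) (g ((n:ℕ):ZMod n)) = 0
      rw [ZMod.natCast_self]
      push_cast
      exact hself _
    · intro k hk
      have := hcon k hk
      push_cast at this ⊢
      exact this
  obtain ⟨k, hk, hke⟩ := hrr
  set i0 : ZMod n := ((k : ℕ) : ZMod n) with hi0
  have hke' : (n : ℝ) / 24 ≤ dT (g i0) (g (i0 + 1)) := hke
  have hone : (1 : ZMod n) ≠ 0 := by
    have hf : Fact (1 < n) := ⟨by omega⟩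
    exact one_ne_zero
  have haddne : ∀ y : ZMod n, y + 1 ≠ y := by
    intro y h
    apply hone
    have : y + 1 = y + 0 := by rw [h]; ring
    exact add_left_cancel this
  -- pointwise bound
  have hpt : ∀ y : ZMod n, (n:ℝ)/48 / (cycleDist n y i0 + 1) ≤
      ⨆ z : {z : ZMod n // z ≠ y}, dT (g y) (g z.1) / cycleDist n y z.1 := by
    intro y
    have hbdd : BddAbove (Set.range fun z : {z : ZMod n // z ≠ y} =>
        dT (g y) (g z.1) / cycleDist n y z.1) :=
      Set.Finite.bddAbove (Set.finite_range _)
    by_cases hyi : y = i0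
    · subst hyi
      refine le_trans ?_ (le_ciSup hbdd ⟨i0 + 1, haddne i0⟩)
      have hcd : cycleDist n i0 (i0 + 1) = 1 := cycleDist_succ n (by omega) i0
      rw [cycleDist_self, hcd]
      simp only [zero_add, div_one]
      linarith [hke']
    · have hsplit : (n:ℝ)/48 ≤ dT (g y) (g i0) ∨ (n:ℝ)/48 ≤ dT (g y) (g (i0 + 1)) := by
        by_contra hc
        push_neg at hc
        have ht := htriT (g i0) (g y) (g (i0 + 1))
        rw [hsymT (g i0) (g y)] at ht
        linarith [hc.1, hc.2, hke']
      have hd1 : 0 < cycleDist n y i0 := cycleDist_pos n hyi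
      rcases hsplit with hs | hs
      · refine le_trans ?_ (le_ciSup hbdd ⟨i0, Ne.symm hyi⟩)
        exact div_le_div₀ (hnnegT _ _) hs hd1 (by linarith)
      · have hne2 : i0 + 1 ≠ y := by
          intro h
          rw [← h, hself] at hs
          have : (0:ℝ) < (n:ℝ)/48 := by positivity
          linarith
        refine le_trans ?_ (le_ciSup hbdd ⟨i0 + 1, hne2⟩)
        have hdt : cycleDist n y (i0 + 1) ≤ cycleDist n y i0 + 1 := by
          have := cycleDist_triangle n y i0 (i0 + 1)
          rw [cycleDist_succ n (by omega) i0] at this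
          linarith
        have hd2 : 0 < cycleDist n y (i0 + 1) := cycleDist_pos n (Ne.symm hne2)
        exact div_le_div₀ (hnnegT _ _) hs hd2 hdt
  -- sum the pointwise bounds
  have hsum1 : ∑ y : ZMod n, (n:ℝ)/48 / (cycleDist n y i0 + 1) ≤
      ∑ y : ZMod n, ⨆ z : {z : ZMod n // z ≠ y}, dT (g y) (g z.1) / cycleDist n y z.1 :=
    Finset.sum_le_sum (fun y _ => hpt y)
  -- reindex
  have hre : ∑ y : ZMod n, (n:ℝ)/48 / (cycleDist n y 0 + 1) =
      ∑ y : ZMod n, (n:ℝ)/48 / (cycleDist n y i0 + 1) := by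
    refine Fintype.sum_equiv (Equiv.addRight i0) _ _ ?_
    intro x
    have : cycleDist n x 0 = cycleDist n (x + i0) i0 := by
      unfold cycleDist
      have h1 : x - 0 = x + i0 - i0 := by ring
      have h2 : (0:ZMod n) - x = i0 - (x + i0) := by ring
      rw [h1, h2]
    rw [this]
    rfl
  -- to a sum over range n
  have hre2 : ∑ y : ZMod n, (n:ℝ)/48 / (cycleDist n y 0 + 1) =
      ∑ j ∈ Finset.range n, (n:ℝ)/48 / (cycleDist n (j : ZMod n) 0 + 1) := by
    refine Finset.sum_bij' (fun (y : ZMod n) _ => y.val) (fun j _ => (j : ZMod n)) ?_ ?_ ?_ ?_ ?_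
    · intro y _
      exact Finset.mem_range.mpr (ZMod.val_lt y)
    · intro j _
      exact Finset.mem_univ _
    · intro y _
      exact ZMod.natCast_rightInverse y
    · intro j hj
      exact ZMod.val_natCast_of_lt (Finset.mem_range.mp hj)
    · intro y _
      rw [ZMod.natCast_rightInverse y]
  -- harmonic lower bound
  have hterm : ∀ j : ℕ, j < n → (n:ℝ)/48 * ((j:ℝ)+1)⁻¹ ≤
      (n:ℝ)/48 / (cycleDist n (j : ZMod n) 0 + 1) := by
    intro j hj
    have hcd : cycleDist n (j : ZMod n) 0 ≤ (j : ℝ) := by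
      rw [cycleDist_comm]
      have h0 : (0:ZMod n) = ((0:ℕ) : ZMod n) := by push_cast; rfl
      rw [h0, cycleDist_natCast n (Nat.zero_le j) (le_of_lt hj)]
      have : min (j - 0) (n - (j - 0)) ≤ j := by omega
      exact_mod_cast this
    have hcd0 : 0 ≤ cycleDist n (j : ZMod n) 0 := cycleDist_nonneg n _ _
    rw [div_eq_mul_inv ((n:ℝ)/48)]
    have h1 : ((j:ℝ)+1)⁻¹ ≤ (cycleDist n (j : ZMod n) 0 + 1)⁻¹ := by
      apply inv_anti₀
      · linarith
      · linarith
    have h2 : (0:ℝ) ≤ (n:ℝ)/48 := by positivity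
    exact mul_le_mul_of_nonneg_left h1 h2
  have hharm : (n:ℝ)/48 * Real.log n ≤
      ∑ j ∈ Finset.range n, (n:ℝ)/48 / (cycleDist n (j : ZMod n) 0 + 1) := by
    have h1 : ∑ j ∈ Finset.range n, (n:ℝ)/48 * ((j:ℝ)+1)⁻¹ ≤
        ∑ j ∈ Finset.range n, (n:ℝ)/48 / (cycleDist n (j : ZMod n) 0 + 1) :=
      Finset.sum_le_sum (fun j hj => hterm j (Finset.mem_range.mp hj))
    have h2 : ∑ j ∈ Finset.range n, (n:ℝ)/48 * ((j:ℝ)+1)⁻¹ =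
        (n:ℝ)/48 * ((harmonic n : ℚ) : ℝ) := by
      rw [← Finset.mul_sum]
      congr 1
      rw [harmonic]
      push_cast
      rfl
    have h3 : Real.log n ≤ ((harmonic n : ℚ) : ℝ) := by
      refine le_trans ?_ (log_add_one_le_harmonic n)
      have : (n:ℝ) ≤ (n:ℝ) + 1 := by linarith
      exact Real.log_le_log hn0 (by exact_mod_cast this)
    calc (n:ℝ)/48 * Real.log n ≤ (n:ℝ)/48 * ((harmonic n : ℚ) : ℝ) := by
            apply mul_le_mul_of_nonneg_left h3 (by positivity)
      _ = ∑ j ∈ Finset.range n, (n:ℝ)/48 * ((j:ℝ)+1)⁻¹ := h2.symm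
      _ ≤ _ := h1
  calc (1:ℝ)/48 * n * Real.log n = (n:ℝ)/48 * Real.log n := by ring
    _ ≤ ∑ j ∈ Finset.range n, (n:ℝ)/48 / (cycleDist n (j : ZMod n) 0 + 1) := hharm
    _ = ∑ y : ZMod n, (n:ℝ)/48 / (cycleDist n y i0 + 1) := by rw [← hre2, hre]
    _ ≤ _ := hsum1
end
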